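/- arXiv:1801.07038 — 9 statements merged into one kernel-verified Lean document; each statement's English description precedes it below -/
import Mathlib

section
/- Let k be a positive integer and let x_0, x_1, ..., x_{k-1} be nonnegative integers such that the sum over i of 2^i * x_i equals 2^k - 1 and the sum over i of x_i equals k. Then x_i = 1 for all 0 ≤ i < k. -/
/-- Binary digit sum (popcount). -/
def popc (n : ℕ) : ℕ := (Nat.digits 2 n).sum

lemma popc_zero : popc 0 = 0 := by simp [popc]

lemma popc_rec {n : ℕ} (hn : n ≠ 0) : popc n = n % 2 + popc (n / 2) := by
  unfold popc
  rw [Nat.digits_def' (by norm_num) (Nat.pos_of_ne_zero hn)]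
  simp

lemma popc_two_mul (a : ℕ) : popc (2 * a) = popc a := by
  rcases Nat.eq_zero_or_pos a with rfl | ha
  · simp
  · rw [popc_rec (by omega)]
    simp [Nat.mul_div_cancel_left, Nat.mul_mod_right]

lemma popc_two_mul_add_one (a : ℕ) : popc (2 * a + 1) = 1 + popc a := by
  rw [popc_rec (by omega)]
  have h1 : (2 * a + 1) % 2 = 1 := by omega
  have h2 : (2 * a + 1) / 2 = a := by omega
  rw [h1, h2]

lemma popc_succ_le (n : ℕ) : popc (n + 1) ≤ popc n + 1 := by
  induction n using Nat.strong_induction_on with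
  | _ n ih =>
    rcases Nat.even_or_odd n with ⟨c, hc⟩ | ⟨c, hc⟩
    · subst hc
      rw [show c + c = 2 * c by ring, popc_two_mul_add_one, popc_two_mul]
      omega
    · subst hc
      rw [show 2 * c + 1 + 1 = 2 * (c + 1) by ring, popc_two_mul,
        popc_two_mul_add_one]
      have := ih c (by omega)
      omega

lemma popc_add_two_mul_le (c a : ℕ) : popc (c + 2 * a) ≤ c + popc a := by
  induction c with
  | zero => simp [popc_two_mul]
  | succ c ih =>
    calc popc (c + 1 + 2 * a) = popc ((c + 2 * a) + 1) := by ring_nf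
      _ ≤ popc (c + 2 * a) + 1 := popc_succ_le _
      _ ≤ c + popc a + 1 := by omega
      _ = c + 1 + popc a := by ring

lemma popc_pow_sub_one (k : ℕ) : popc (2 ^ k - 1) = k := by
  induction k with
  | zero => simp [popc_zero]
  | succ k ih =>
    have h : 2 ^ (k + 1) - 1 = 2 * (2 ^ k - 1) + 1 := by
      have : 1 ≤ 2 ^ k := Nat.one_le_two_pow
      rw [pow_succ]; omega
    rw [h, popc_two_mul_add_one, ih]; omega

/-- Key lemma: any representation of `n` as a sum of powers of two uses at
least `popc n` terms. -/
lemma popc_le_sum : ∀ (m : ℕ) (x : ℕ → ℕ) (n : ℕ),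
    ∑ i ∈ Finset.range m, 2 ^ i * x i = n → popc n ≤ ∑ i ∈ Finset.range m, x i := by
  intro m
  induction m with
  | zero => intro x n h; simp at h; subst h; simp [popc_zero]
  | succ m ih =>
    intro x n h
    rw [Finset.sum_range_succ' _ m] at h
    rw [Finset.sum_range_succ' _ m]
    simp only [pow_zero, one_mul] at h
    have hrw : ∑ i ∈ Finset.range m, 2 ^ (i + 1) * x (i + 1)
        = 2 * ∑ i ∈ Finset.range m, 2 ^ i * x (i + 1) := by
      rw [Finset.mul_sum]; congr 1; ext i; ring
    rw [hrw] at h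
    set n' := ∑ i ∈ Finset.range m, 2 ^ i * x (i + 1) with hn'
    have hle : popc n' ≤ ∑ i ∈ Finset.range m, x (i + 1) := ih (fun i => x (i + 1)) n' rfl
    calc popc n = popc (x 0 + 2 * n') := by rw [← h]; ring_nf
      _ ≤ x 0 + popc n' := popc_add_two_mul_le _ _
      _ ≤ x 0 + ∑ i ∈ Finset.range m, x (i + 1) := by omega
      _ = (∑ i ∈ Finset.range m, x (i + 1)) + x 0 := by ring

theorem binary_weighted_sum_equality_case (k : ℕ) (hk : 0 < k) (x : ℕ → ℕ)
    (h : ∑ i ∈ Finset.range k, 2 ^ i * x i = 2 ^ k - 1)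
    (hsum : ∑ i ∈ Finset.range k, x i = k) :
    ∀ i < k, x i = 1 := by
  induction k generalizing x with
  | zero => omega
  | succ k ih =>
    -- x 0 is odd since 2^(k+1) - 1 is odd
    rw [Finset.sum_range_succ' _ k] at h hsum
    simp only [pow_zero, one_mul] at h
    have hrw : ∑ i ∈ Finset.range k, 2 ^ (i + 1) * x (i + 1)
        = 2 * ∑ i ∈ Finset.range k, 2 ^ i * x (i + 1) := by
      rw [Finset.mul_sum]; congr 1; ext i; ring
    rw [hrw] at h
    set n' := ∑ i ∈ Finset.range k, 2 ^ i * x (i + 1) with hn'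
    have hpow : 1 ≤ 2 ^ (k + 1) := Nat.one_le_two_pow
    have hodd : x 0 % 2 = 1 := by
      have h2 : (2 ^ (k + 1) - 1) % 2 = 1 := by
        have : 2 ^ (k + 1) % 2 = 0 := by
          simp [pow_succ, Nat.mul_mod_left]
        omega
      omega
    -- case on x 0
    rcases Nat.lt_or_ge (x 0) 2 with h1 | h3
    · -- x 0 = 1
      have hx0 : x 0 = 1 := by omega
      rcases Nat.eq_zero_or_pos k with rfl | hkpos
      · intro i hi
        interval_cases i
        exact hx0
      · have hn'eq : n' = 2 ^ k - 1 := by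
          have : 2 * n' + 1 = 2 ^ (k + 1) - 1 := by omega
          have hp : 1 ≤ 2 ^ k := Nat.one_le_two_pow
          rw [pow_succ] at this
          omega
        have hsum' : ∑ i ∈ Finset.range k, x (i + 1) = k := by omega
        have := ih hkpos (fun i => x (i + 1)) hn'eq hsum'
        intro i hi
        rcases Nat.eq_zero_or_pos i with rfl | hipos
        · exact hx0
        · have := this (i - 1) (by omega)
          simpa [Nat.sub_add_cancel hipos] using this
    · -- x 0 ≥ 3 (odd), derive contradiction via popcount
      exfalso
      have hx3 : 3 ≤ x 0 := by omega
      -- modified representation: x' 0 = x 0 - 2, x' 1 = x 1 + 1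
      have hk1 : 1 ≤ k := by
        by_contra hk0
        have hk0' : k = 0 := by omega
        subst hk0'
        simp [hn'] at h
        omega
      have hmem : (0 : ℕ) ∈ Finset.range k := Finset.mem_range.mpr (by omega)
      set x' : ℕ → ℕ := fun i => if i = 0 then x 0 - 2 else if i = 1 then x 1 + 1 else x i with hx'
      have hrep : ∑ i ∈ Finset.range (k + 1), 2 ^ i * x' i = 2 ^ (k + 1) - 1 := by
        rw [Finset.sum_range_succ' _ k]
        have hrw' : ∑ i ∈ Finset.range k, 2 ^ (i + 1) * x' (i + 1)
            = 2 * ∑ i ∈ Finset.range k, 2 ^ i * x' (i + 1) := by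
          rw [Finset.mul_sum]; congr 1; ext i; ring
        rw [hrw']
        have hsplit : ∑ i ∈ Finset.range k, 2 ^ i * x' (i + 1)
            = n' + 1 := by
          have hd : ∀ i ∈ Finset.range k, 2 ^ i * x' (i + 1)
              = 2 ^ i * x (i + 1) + (if i = 0 then 1 else 0) := by
            intro i _
            rcases Nat.eq_zero_or_pos i with rfl | hipos
            · simp [hx']
            · have h1 : i + 1 ≠ 0 := by omega
              have h2 : i + 1 ≠ 1 := by omega
              simp [hx', h1, h2, Nat.ne_of_gt hipos]
          rw [Finset.sum_congr rfl hd, Finset.sum_add_distrib, hn',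
            Finset.sum_ite_eq' (Finset.range k) 0 (fun _ => 1)]
          simp [hmem]
        rw [hsplit]
        simp only [hx', if_pos rfl, pow_zero, one_mul]
        omega
      have hcount : ∑ i ∈ Finset.range (k + 1), x' i = k := by
        rw [Finset.sum_range_succ' _ k]
        have hd : ∀ i ∈ Finset.range k, x' (i + 1)
            = x (i + 1) + (if i = 0 then 1 else 0) := by
          intro i _
          rcases Nat.eq_zero_or_pos i with rfl | hipos
          · simp [hx']
          · have h1 : i + 1 ≠ 0 := by omega
            have h2 : i + 1 ≠ 1 := by omega
            simp [hx', h1, h2, Nat.ne_of_gt hipos]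
        rw [Finset.sum_congr rfl hd, Finset.sum_add_distrib,
          Finset.sum_ite_eq' (Finset.range k) 0 (fun _ => 1)]
        simp only [hx', if_pos rfl]
        simp only [hmem, if_pos]
        omega
      have := popc_le_sum (k + 1) x' (2 ^ (k + 1) - 1) hrep
      rw [popc_pow_sub_one, hcount] at this
      omega
end

section
/- Let S be the union of k ≥ 1 distinct lines of a p-admissible incidence system. Then (p+1)k − k(k−1)/2 ≤ |S| ≤ pk + 1. -/
/-- An incidence system on an ambient type `α`: a finite point set together with a
finite set of lines, each line being a subset of the point set. -/
structure IncSys (α : Type) [DecidableEq α] where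
  pts : Finset α
  lines : Finset (Finset α)
  line_sub : ∀ ℓ ∈ lines, ℓ ⊆ pts

/-- A `p`-admissible incidence system: `p² + p + 1` points, every line has `p + 1` points,
and any two distinct lines meet in exactly one point. -/
def IsAdmissible {α : Type} [DecidableEq α] (p : ℕ) (Y : IncSys α) : Prop :=
  Y.pts.card = p ^ 2 + p + 1 ∧ (∀ ℓ ∈ Y.lines, ℓ.card = p + 1) ∧
    ∀ ℓ₁ ∈ Y.lines, ∀ ℓ₂ ∈ Y.lines, ℓ₁ ≠ ℓ₂ → (ℓ₁ ∩ ℓ₂).card = 1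

lemma aux_card_union {α : Type} [DecidableEq α] (p : ℕ) (Y : IncSys α)
    (hY : IsAdmissible p Y) :
    ∀ (T : Finset (Finset α)) (_ : T.Nonempty), T ⊆ Y.lines →
      (2 * (p + 1) * T.card - T.card * (T.card - 1) : ℤ) ≤ 2 * ((T.sup id).card : ℤ) ∧
        ((T.sup id).card : ℤ) ≤ p * T.card + 1 := by
  obtain ⟨-, hlc, hmeet⟩ := hY
  intro T hT
  induction hT using Finset.Nonempty.cons_induction with
  | singleton a =>
    intro hsub
    have ha : a ∈ Y.lines := hsub (Finset.mem_singleton_self a)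
    have := hlc a ha
    simp only [Finset.sup_singleton, id, Finset.card_singleton, this]
    push_cast
    constructor <;> nlinarith
  | cons a s ha hs ih =>
    intro hsub
    have ha' : a ∈ Y.lines := hsub (Finset.mem_cons_self a s)
    have hsub' : s ⊆ Y.lines := fun x hx => hsub (Finset.mem_cons_of_mem hx)
    obtain ⟨hlow, hhigh⟩ := ih hsub'
    set U := s.sup id with hU
    have hsupc : (Finset.cons a s ha).sup id = a ∪ U := by
      rw [Finset.sup_cons]; rfl
    -- 1 ≤ (a ∩ U).card
    obtain ⟨b, hb⟩ := hs
    have hb' : b ∈ Y.lines := hsub' hb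
    have hab : a ≠ b := fun h => ha (h ▸ hb)
    have h1 : (a ∩ b).card = 1 := hmeet a ha' b hb' hab
    have hbU : b ⊆ U := Finset.le_sup (f := id) hb
    have hm1 : 1 ≤ (a ∩ U).card := by
      rw [← h1]
      exact Finset.card_le_card (Finset.inter_subset_inter (Finset.Subset.refl a) hbU)
    -- (a ∩ U).card ≤ s.card
    have hm2 : (a ∩ U).card ≤ s.card := by
      have hdist : a ∩ U = s.sup (fun ℓ => a ∩ ℓ) := by
        rw [hU]
        exact Finset.sup_inf_distrib_left s id a
      rw [hdist, Finset.sup_eq_biUnion]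
      calc (s.biUnion fun ℓ => a ∩ ℓ).card ≤ ∑ ℓ ∈ s, (a ∩ ℓ).card :=
            Finset.card_biUnion_le
        _ = ∑ ℓ ∈ s, 1 := by
            apply Finset.sum_congr rfl
            intro ℓ hℓ
            exact hmeet a ha' ℓ (hsub' hℓ) (fun h => ha (h ▸ hℓ))
        _ = s.card := by simp
    have hca : a.card = p + 1 := hlc a ha'
    have hcu : (a ∪ U).card + (a ∩ U).card = a.card + U.card :=
      Finset.card_union_add_card_inter a U
    rw [hsupc, Finset.card_cons]
    have hcu' : ((a ∪ U).card : ℤ) + ((a ∩ U).card : ℤ) = (p + 1) + (U.card : ℤ) := by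
      exact_mod_cast hca ▸ hcu
    have hm1' : (1 : ℤ) ≤ ((a ∩ U).card : ℤ) := by exact_mod_cast hm1
    have hm2' : ((a ∩ U).card : ℤ) ≤ (s.card : ℤ) := by exact_mod_cast hm2
    push_cast
    constructor <;> nlinarith

/-- Lemma 3.6: the union `S` of `k ≥ 1` distinct lines of a `p`-admissible incidence
system satisfies `(p+1)k − k(k−1)/2 ≤ |S| ≤ pk + 1`. -/
theorem card_union_of_lines_bounds {α : Type} [DecidableEq α] (p k : ℕ) (hk : 1 ≤ k)
    (Y : IncSys α) (hY : IsAdmissible p Y)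
    (T : Finset (Finset α)) (hT : T ⊆ Y.lines) (hTcard : T.card = k) :
    ((p + 1) * k - k * (k - 1) / 2 : ℤ) ≤ ((T.sup id).card : ℤ) ∧
      ((T.sup id).card : ℤ) ≤ p * k + 1 := by
  have hTne : T.Nonempty := Finset.card_pos.mp (hTcard ▸ hk)
  obtain ⟨hlow, hhigh⟩ := aux_card_union p Y hY T hTne hT
  rw [hTcard] at hlow hhigh
  refine ⟨?_, hhigh⟩
  have heven : Even ((k : ℤ) * ((k : ℤ) - 1)) := Int.even_mul_pred_self k
  obtain ⟨m, hm⟩ := heven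
  have hdiv : ((k : ℤ) * ((k : ℤ) - 1)) / 2 = m := by omega
  have hk1 : (1 : ℤ) ≤ (k : ℤ) := by exact_mod_cast hk
  have : ((k : ℤ) - 1) = ((k - 1 : ℕ) : ℤ) := by
    push_cast [Nat.cast_sub hk]; ring
  rw [← this] at *
  rw [hdiv]
  linarith
end

section
/- Let Y and Y′ be two p-admissible incidence systems on possibly different point sets, and suppose some set S is simultaneously the union of m distinct lines of Y and the union of k distinct lines of Y′. If k(k−1)/2 < p, then m = k. -/
open Finset

/-- product of consecutive integers is nonnegative -/
lemma consec_nonneg (a : ℤ) : 0 ≤ a * (a - 1) := by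
  rcases le_or_gt a 0 with h | h
  · nlinarith
  · exact mul_nonneg (by linarith) (by linarith)

set_option maxHeartbeats 1000000 in
lemma arith_key (k p m e j : ℤ)
    (h1 : 1 ≤ k) (h2 : k*(k-1) + 4 ≤ 2*(p+1)) (h3 : k+1 ≤ m)
    (h4 : k-1 ≤ e) (h5 : 2*e ≤ k*(k-1))
    (h7 : j*k ≤ m) (h8 : m ≤ j*k + k - 1)
    (hB : m*(m-1) + k*(k*(p+1) - e) ≤ k*(m*(p+1)))
    (hA : 2*j*(m*(p+1)) ≤ m*(m-1) + j*(j+1)*(k*(p+1) - e)) :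
    False := by
  have hj : 1 ≤ j := by nlinarith
  have hP : (2:ℤ) ≤ p + 1 := by nlinarith
  have hs0 : 0 ≤ m - j*k := by linarith
  have hs1 : m - j*k ≤ k - 1 := by linarith
  rcases le_or_gt k j with hk | hk
  · rcases eq_or_lt_of_le h1 with h1' | h1'
    · have hk1 : k = 1 := h1'.symm
      subst hk1
      have he : e = 0 := by linarith
      subst he
      have hmj : m = j := by linarith
      subst hmj
      have hm2 : 2 ≤ m := h3
      nlinarith [mul_pos (mul_pos (by linarith : (0:ℤ) < m) (by linarith : (0:ℤ) < m - 1)) (by linarith : (0:ℤ) < p)]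
    · have he : 1 ≤ e := by linarith
      have hjj : k < j*(j+1) := by nlinarith
      nlinarith [mul_nonneg (mul_nonneg (mul_nonneg (by linarith : (0:ℤ) ≤ j-1) (by linarith : (0:ℤ) ≤ j-k)) (by linarith : (0:ℤ) ≤ k)) (by linarith : (0:ℤ) ≤ p+1),
        mul_nonneg (mul_nonneg hs0 (by linarith : (0:ℤ) ≤ 2*j-k)) (by linarith : (0:ℤ) ≤ p+1),
        mul_pos (by linarith : (0:ℤ) < e) (by linarith : (0:ℤ) < j*(j+1) - k)]
  · have key : 2*(m*(m-1)) < j*((j-1)*k+2*(m-j*k))*(k*k-k+4) + 2*(j*(j+1))*(k-1) := by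
      rcases eq_or_lt_of_le hj with hj1 | hj2
      · have hj1' : j = 1 := hj1.symm
        subst hj1'
        have hs2 : 1 ≤ m - k := by linarith
        have hq : (0:ℤ) ≤ k*k-4*k+5 := by nlinarith [sq_nonneg (k-2)]
        nlinarith [mul_nonneg (by linarith : (0:ℤ) ≤ m-k-1) (by linarith : (0:ℤ) ≤ k-1-(m-k)),
          mul_nonneg (by linarith : (0:ℤ) ≤ m-k-1) hq]
      · have hj2' : 2 ≤ j := hj2
        have hk3 : 3 ≤ k := by linarith
        have hb1 : 0 ≤ (j-1)*(k*k) - (3*j-1)*k + 4*j - 2 := by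
          rcases eq_or_lt_of_le hj2' with hj2'' | hj3
          · have hj2''' : j = 2 := hj2''.symm
            subst hj2'''
            nlinarith [mul_nonneg (by linarith : (0:ℤ) ≤ k-2) (by linarith : (0:ℤ) ≤ k-3)]
          · have hj3' : 3 ≤ j := hj3
            have hb0 : 0 ≤ (j-1)*k - (3*j-1) := by
              nlinarith [mul_nonneg (by linarith : (0:ℤ) ≤ j-1) (by linarith : (0:ℤ) ≤ k-j-1),
                mul_nonneg (by linarith : (0:ℤ) ≤ j-3) (by linarith : (0:ℤ) ≤ j+1)]
            nlinarith [mul_nonneg (by linarith : (0:ℤ) ≤ k) hb0]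
        have hb2 : 0 ≤ j*k*(k-3) + 4*j + 1 - (m-j*k) := by
          nlinarith [mul_nonneg (mul_nonneg (by linarith : (0:ℤ) ≤ j) (by linarith : (0:ℤ) ≤ k)) (by linarith : (0:ℤ) ≤ k-3)]
        nlinarith [mul_nonneg (mul_nonneg (by linarith : (0:ℤ) ≤ j) (by linarith : (0:ℤ) ≤ k)) hb1,
          mul_nonneg hs0 hb2,
          mul_pos (mul_pos (by linarith : (0:ℤ) < j) (by linarith : (0:ℤ) < j+1)) (by linarith : (0:ℤ) < k-1)]
    have hjk : (0:ℤ) ≤ (j-1)*k := mul_nonneg (by linarith) (by linarith)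
    nlinarith [mul_nonneg (mul_nonneg (by linarith : (0:ℤ) ≤ j) (by linarith : (0:ℤ) ≤ (j-1)*k+2*(m-j*k))) (by linarith : (0:ℤ) ≤ 2*(p+1) - (k*k-k+4)),
      mul_nonneg (by positivity : (0:ℤ) ≤ j*(j+1)) (by linarith : (0:ℤ) ≤ e - (k-1))]

/-- wrapper of arith_key stated via N = |S| -/
lemma arith_key' (k p m N j : ℤ)
    (h1 : 1 ≤ k) (h2 : k*(k-1) + 4 ≤ 2*(p+1)) (h3 : k+1 ≤ m)
    (h4 : N + (k-1) ≤ k*(p+1)) (h5 : 2*(k*(p+1) - N) ≤ k*(k-1))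
    (h7 : j*k ≤ m) (h8 : m ≤ j*k + k - 1)
    (hB : m*(m-1) + k*N ≤ k*(m*(p+1)))
    (hA : 2*j*(m*(p+1)) ≤ m*(m-1) + j*(j+1)*N) :
    False := by
  apply arith_key k p m (k*(p+1) - N) j h1 h2 h3 (by linarith) (by linarith) h7 h8
  · nlinarith [hB]
  · nlinarith [hA]

-- double counting lemma
lemma deg_sums {α : Type} [DecidableEq α] (p : ℕ) (U : Finset (Finset α))
    (hcard : ∀ ℓ ∈ U, ℓ.card = p+1)
    (hint : ∀ ℓ₁ ∈ U, ∀ ℓ₂ ∈ U, ℓ₁ ≠ ℓ₂ → (ℓ₁ ∩ ℓ₂).card = 1) :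
    (∑ x ∈ U.sup id, (U.filter (fun ℓ => x ∈ ℓ)).card) = U.card * (p+1) ∧
    (∑ x ∈ U.sup id, (U.filter (fun ℓ => x ∈ ℓ)).card * (U.filter (fun ℓ => x ∈ ℓ)).card)
      + U.card = U.card * (p+1) + U.card * U.card := by
  classical
  set S := U.sup id with hS
  have hsub : ∀ ℓ ∈ U, ℓ ⊆ S := fun ℓ hℓ => Finset.le_sup (f := id) hℓ
  have hfil : ∀ ℓ ∈ U, S.filter (fun x => x ∈ ℓ) = ℓ := by
    intro ℓ hℓ
    ext x
    simp only [Finset.mem_filter]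
    exact ⟨fun h => h.2, fun h => ⟨hsub ℓ hℓ h, h⟩⟩
  have swap1 : ∀ (w : α → ℕ), (∑ x ∈ S, ∑ ℓ ∈ U, (if x ∈ ℓ then w x else 0))
      = ∑ ℓ ∈ U, ∑ x ∈ ℓ, w x := by
    intro w
    rw [Finset.sum_comm]
    refine Finset.sum_congr rfl fun ℓ hℓ => ?_
    rw [← Finset.sum_filter, hfil ℓ hℓ]
  have hd : ∀ x, (U.filter (fun ℓ => x ∈ ℓ)).card = ∑ ℓ ∈ U, (if x ∈ ℓ then 1 else 0) := by
    intro x; rw [Finset.card_filter]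
  have sum1 : (∑ x ∈ S, (U.filter (fun ℓ => x ∈ ℓ)).card) = U.card * (p+1) := by
    calc (∑ x ∈ S, (U.filter (fun ℓ => x ∈ ℓ)).card)
        = ∑ x ∈ S, ∑ ℓ ∈ U, (if x ∈ ℓ then 1 else 0) := by
          refine Finset.sum_congr rfl fun x _ => hd x
      _ = ∑ ℓ ∈ U, ∑ x ∈ ℓ, 1 := swap1 (fun _ => 1)
      _ = ∑ ℓ ∈ U, (p+1) := by
          refine Finset.sum_congr rfl fun ℓ hℓ => ?_
          rw [Finset.sum_const, smul_eq_mul, mul_one, hcard ℓ hℓ]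
      _ = U.card * (p+1) := by rw [Finset.sum_const, smul_eq_mul]
  refine ⟨sum1, ?_⟩
  have inner : ∀ ℓ₁ ∈ U, (∑ x ∈ ℓ₁, (U.filter (fun ℓ => x ∈ ℓ)).card)
      = (p+1) + (U.card - 1) := by
    intro ℓ₁ hℓ₁
    have : (∑ x ∈ ℓ₁, (U.filter (fun ℓ => x ∈ ℓ)).card)
        = ∑ ℓ₂ ∈ U, (ℓ₁ ∩ ℓ₂).card := by
      calc (∑ x ∈ ℓ₁, (U.filter (fun ℓ => x ∈ ℓ)).card)
          = ∑ x ∈ ℓ₁, ∑ ℓ₂ ∈ U, (if x ∈ ℓ₂ then 1 else 0) := by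
            refine Finset.sum_congr rfl fun x _ => hd x
        _ = ∑ ℓ₂ ∈ U, ∑ x ∈ ℓ₁, (if x ∈ ℓ₂ then 1 else 0) := Finset.sum_comm
        _ = ∑ ℓ₂ ∈ U, (ℓ₁ ∩ ℓ₂).card := by
            refine Finset.sum_congr rfl fun ℓ₂ _ => ?_
            rw [← Finset.sum_filter]
            have hfe : ℓ₁.filter (fun x => x ∈ ℓ₂) = ℓ₁ ∩ ℓ₂ := by
              ext x; simp [Finset.mem_filter, Finset.mem_inter]
            rw [hfe, Finset.card_eq_sum_ones]
    rw [this, ← Finset.add_sum_erase _ _ hℓ₁, Finset.inter_self, hcard ℓ₁ hℓ₁]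
    congr 1
    rw [Finset.sum_congr rfl (fun ℓ₂ hℓ₂ => hint ℓ₁ hℓ₁ ℓ₂ (Finset.mem_of_mem_erase hℓ₂)
        (Ne.symm (Finset.ne_of_mem_erase hℓ₂))), Finset.sum_const, smul_eq_mul, mul_one,
      Finset.card_erase_of_mem hℓ₁]
  have sum2 : (∑ x ∈ S, (U.filter (fun ℓ => x ∈ ℓ)).card * (U.filter (fun ℓ => x ∈ ℓ)).card)
      = U.card * ((p+1) + (U.card - 1)) := by
    calc (∑ x ∈ S, (U.filter (fun ℓ => x ∈ ℓ)).card * (U.filter (fun ℓ => x ∈ ℓ)).card)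
        = ∑ x ∈ S, ∑ ℓ ∈ U, (if x ∈ ℓ then (U.filter (fun ℓ' => x ∈ ℓ')).card else 0) := by
          refine Finset.sum_congr rfl fun x _ => ?_
          rw [← Finset.sum_filter, Finset.sum_const, smul_eq_mul]
      _ = ∑ ℓ₁ ∈ U, ∑ x ∈ ℓ₁, (U.filter (fun ℓ' => x ∈ ℓ')).card :=
          swap1 (fun x => (U.filter (fun ℓ' => x ∈ ℓ')).card)
      _ = ∑ ℓ₁ ∈ U, ((p+1) + (U.card - 1)) := Finset.sum_congr rfl inner
      _ = U.card * ((p+1) + (U.card - 1)) := by rw [Finset.sum_const, smul_eq_mul]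
  rw [sum2]
  rcases Nat.eq_zero_or_pos U.card with h0 | h1
  · simp [h0]
  · have : U.card - 1 + 1 = U.card := Nat.succ_pred_eq_of_pos h1
    nlinarith [this]

set_option maxHeartbeats 4000000 in
theorem eq_of_union_of_lines_eq' {α : Type} [DecidableEq α] (p m k : ℕ)
    (Y Y' : Finset (Finset α))
    (hYc : ∀ ℓ ∈ Y, ℓ.card = p + 1)
    (hYi : ∀ ℓ₁ ∈ Y, ∀ ℓ₂ ∈ Y, ℓ₁ ≠ ℓ₂ → (ℓ₁ ∩ ℓ₂).card = 1)
    (hY'c : ∀ ℓ ∈ Y', ℓ.card = p + 1)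
    (hY'i : ∀ ℓ₁ ∈ Y', ∀ ℓ₂ ∈ Y', ℓ₁ ≠ ℓ₂ → (ℓ₁ ∩ ℓ₂).card = 1)
    (hm : Y.card = m) (hkc : Y'.card = k)
    (hS : Y.sup id = Y'.sup id)
    (hp : k * (k - 1) / 2 < p) :
    m = k := by
  classical
  obtain ⟨hm1, hm2⟩ := deg_sums p Y hYc hYi
  obtain ⟨hk1, hk2⟩ := deg_sums p Y' hY'c hY'i
  rw [← hS] at hk1 hk2
  rw [hm] at hm1 hm2
  rw [hkc] at hk1 hk2
  set S := Y.sup id with hSdef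
  have hp1 : 0 < p := lt_of_le_of_lt (Nat.zero_le _) hp
  -- case k = 0
  rcases Nat.eq_zero_or_pos k with hk0 | hkpos
  · have hY'e : Y' = ∅ := Finset.card_eq_zero.mp (by rw [hkc, hk0])
    have hSe : S = ∅ := by rw [hS, hY'e]; simp
    have hYe : Y = ∅ := by
      by_contra h
      obtain ⟨ℓ, hℓ⟩ := Finset.nonempty_iff_ne_empty.mpr h
      have hsub : ℓ ⊆ S := Finset.le_sup (f := id) hℓ
      have hcard : ℓ.card = p + 1 := hYc ℓ hℓ
      have hne : ℓ.Nonempty := by rw [← Finset.card_pos, hcard]; omega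
      obtain ⟨x, hx⟩ := hne
      have := hsub hx
      rw [hSe] at this
      exact absurd this (Finset.notMem_empty x)
    rw [← hm, ← hkc, hYe, hY'e]
  -- case k ≥ 1
  have hkz : (1:ℤ) ≤ (k:ℤ) := by exact_mod_cast hkpos
  -- k(k-1)+2 ≤ 2p over ℤ
  have hkk : (k:ℤ)*((k:ℤ)-1) + 2 ≤ 2*(p:ℤ) := by
    obtain ⟨c, hc⟩ := Nat.even_mul_succ_self (k-1)
    have hk1' : k - 1 + 1 = k := by omega
    rw [hk1'] at hc
    have hq : k*(k-1) = c + c := by rw [mul_comm]; exact hc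
    have hdivq : k*(k-1)/2 = c := by rw [hq]; omega
    have hpc : c < p := hdivq ▸ hp
    have hqz : (k:ℤ)*((k:ℤ)-1) = (c:ℤ) + c := by zify [hkpos] at hq; exact hq
    have hpcz : (c:ℤ) < p := by exact_mod_cast hpc
    linarith
  -- notation for degrees
  set N := S.card with hNdef
  -- cast sums to ℤ
  have hm1z : (∑ x ∈ S, ((Y.filter (fun ℓ => x ∈ ℓ)).card : ℤ)) = (m:ℤ)*((p:ℤ)+1) := by
    exact_mod_cast hm1
  have hm2z : (∑ x ∈ S, ((Y.filter (fun ℓ => x ∈ ℓ)).card : ℤ) * ((Y.filter (fun ℓ => x ∈ ℓ)).card : ℤ))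
      = (m:ℤ)*((p:ℤ)+1) + (m:ℤ)*(m:ℤ) - m := by
    have h := congrArg (fun n : ℕ => (n:ℤ)) hm2
    push_cast at h
    linarith
  have hk1z : (∑ x ∈ S, ((Y'.filter (fun ℓ => x ∈ ℓ)).card : ℤ)) = (k:ℤ)*((p:ℤ)+1) := by
    exact_mod_cast hk1
  have hk2z : (∑ x ∈ S, ((Y'.filter (fun ℓ => x ∈ ℓ)).card : ℤ) * ((Y'.filter (fun ℓ => x ∈ ℓ)).card : ℤ))
      = (k:ℤ)*((p:ℤ)+1) + (k:ℤ)*(k:ℤ) - k := by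
    have h := congrArg (fun n : ℕ => (n:ℤ)) hk2
    push_cast at h
    linarith
  -- pointwise degree facts
  have hD'ge : ∀ x ∈ S, (1:ℤ) ≤ ((Y'.filter (fun ℓ => x ∈ ℓ)).card : ℤ) := by
    intro x hx
    rw [hS] at hx
    obtain ⟨ℓ, hℓ, hxℓ⟩ := Finset.mem_sup.mp hx
    have hne : (Y'.filter (fun ℓ => x ∈ ℓ)).Nonempty := ⟨ℓ, Finset.mem_filter.mpr ⟨hℓ, hxℓ⟩⟩
    exact_mod_cast Finset.card_pos.mpr hne
  have hDge : ∀ x ∈ S, (1:ℤ) ≤ ((Y.filter (fun ℓ => x ∈ ℓ)).card : ℤ) := by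
    intro x hx
    rw [hSdef] at hx
    obtain ⟨ℓ, hℓ, hxℓ⟩ := Finset.mem_sup.mp hx
    have hne : (Y.filter (fun ℓ => x ∈ ℓ)).Nonempty := ⟨ℓ, Finset.mem_filter.mpr ⟨hℓ, hxℓ⟩⟩
    exact_mod_cast Finset.card_pos.mpr hne
  have hD'le : ∀ x, ((Y'.filter (fun ℓ => x ∈ ℓ)).card : ℤ) ≤ (k:ℤ) := by
    intro x
    have := Finset.card_filter_le Y' (fun ℓ => x ∈ ℓ)
    rw [hkc] at this
    exact_mod_cast this
  -- generic sum inequality helpers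
  have sumineq : ∀ (f : α → ℤ) (a b : ℤ), (∀ x ∈ S, a * f x ≤ f x * f x + b) →
      a * (∑ x ∈ S, f x) ≤ (∑ x ∈ S, f x * f x) + b * (N:ℤ) := by
    intro f a b h
    have h2 := Finset.sum_le_sum h
    rwa [← Finset.mul_sum, Finset.sum_add_distrib, Finset.sum_const, nsmul_eq_mul,
      mul_comm ((N:ℕ):ℤ) b] at h2
  have sumineq2 : ∀ (f : α → ℤ) (a b : ℤ), (∀ x ∈ S, f x * f x + b ≤ a * f x) →
      (∑ x ∈ S, f x * f x) + b * (N:ℤ) ≤ a * (∑ x ∈ S, f x) := by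
    intro f a b h
    have h2 := Finset.sum_le_sum h
    rwa [← Finset.mul_sum, Finset.sum_add_distrib, Finset.sum_const, nsmul_eq_mul,
      mul_comm ((N:ℕ):ℤ) b] at h2
  -- e1 : N + (k-1) ≤ k(p+1)
  have e1 : (N:ℤ) + ((k:ℤ)-1) ≤ (k:ℤ)*((p:ℤ)+1) := by
    have h := sumineq2 (fun x => ((Y'.filter (fun ℓ => x ∈ ℓ)).card : ℤ)) ((k:ℤ)+1) (k:ℤ)
      (fun x hx => by nlinarith [mul_nonneg (sub_nonneg.mpr (hD'le x)) (sub_nonneg.mpr (hD'ge x hx))])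
    rw [hk1z, hk2z] at h
    have h2 : (k:ℤ)*((N:ℤ) + ((k:ℤ)-1)) ≤ (k:ℤ)*((k:ℤ)*((p:ℤ)+1)) := by nlinarith
    exact le_of_mul_le_mul_left h2 (by linarith)
  -- e2 : 2(k(p+1) - N) ≤ k(k-1)
  have e2 : 2*((k:ℤ)*((p:ℤ)+1) - (N:ℤ)) ≤ (k:ℤ)*((k:ℤ)-1) := by
    have h := sumineq (fun x => ((Y'.filter (fun ℓ => x ∈ ℓ)).card : ℤ)) 3 2
      (fun x hx => by nlinarith [consec_nonneg (((Y'.filter (fun ℓ => x ∈ ℓ)).card : ℤ) - 1)])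
    rw [hk1z, hk2z] at h
    linarith
  -- N ≤ k*p + 1 in ℕ
  have hNn : N ≤ k*p + 1 := by
    have h : (N:ℤ) ≤ (k:ℤ)*(p:ℤ) + 1 := by linarith
    exact_mod_cast h
  -- degree bound for Y
  have hDk : ∀ x ∈ S, (Y.filter (fun ℓ => x ∈ ℓ)).card ≤ k := by
    intro x hx
    set F := Y.filter (fun ℓ => x ∈ ℓ) with hF
    have hdisj : ∀ ℓ₁ ∈ F, ∀ ℓ₂ ∈ F, ℓ₁ ≠ ℓ₂ → Disjoint (ℓ₁.erase x) (ℓ₂.erase x) := by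
      intro ℓ₁ h₁ ℓ₂ h₂ hne
      obtain ⟨hℓ₁Y, hx₁⟩ := Finset.mem_filter.mp h₁
      obtain ⟨hℓ₂Y, hx₂⟩ := Finset.mem_filter.mp h₂
      obtain ⟨a, ha⟩ := Finset.card_eq_one.mp (hYi ℓ₁ hℓ₁Y ℓ₂ hℓ₂Y hne)
      have hxa : x = a := by
        have hxm : x ∈ ℓ₁ ∩ ℓ₂ := Finset.mem_inter.mpr ⟨hx₁, hx₂⟩
        rw [ha] at hxm
        exact Finset.mem_singleton.mp hxm
      rw [Finset.disjoint_left]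
      intro y hy₁ hy₂
      have hyx : y ≠ x := Finset.ne_of_mem_erase hy₁
      have hym : y ∈ ℓ₁ ∩ ℓ₂ :=
        Finset.mem_inter.mpr ⟨Finset.mem_of_mem_erase hy₁, Finset.mem_of_mem_erase hy₂⟩
      rw [ha] at hym
      exact hyx ((Finset.mem_singleton.mp hym).trans hxa.symm)
    have hcardb := Finset.card_biUnion hdisj
    have hsubb : (F.biUnion fun ℓ => ℓ.erase x) ⊆ S.erase x := by
      intro y hy
      obtain ⟨ℓ, hℓF, hyℓ⟩ := Finset.mem_biUnion.mp hy
      obtain ⟨hℓY, -⟩ := Finset.mem_filter.mp hℓF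
      have hsub : ℓ ⊆ S := Finset.le_sup (f := id) hℓY
      exact Finset.mem_erase.mpr ⟨Finset.ne_of_mem_erase hyℓ, hsub (Finset.mem_of_mem_erase hyℓ)⟩
    have hsum : (∑ ℓ ∈ F, (ℓ.erase x).card) = F.card * p := by
      rw [Finset.sum_congr rfl (fun ℓ hℓ => ?_), Finset.sum_const, smul_eq_mul]
      obtain ⟨hℓY, hxℓ⟩ := Finset.mem_filter.mp hℓ
      rw [Finset.card_erase_of_mem hxℓ, hYc ℓ hℓY]
      simp
    have hle : F.card * p ≤ N - 1 := by
      rw [← hsum, ← hcardb]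
      calc (F.biUnion fun ℓ => ℓ.erase x).card ≤ (S.erase x).card := Finset.card_le_card hsubb
        _ = N - 1 := by rw [Finset.card_erase_of_mem hx]
    have hle2 : F.card * p ≤ k * p := by
      refine le_trans hle ?_
      exact Nat.sub_le_iff_le_add.mpr (by omega)
    exact Nat.le_of_mul_le_mul_right hle2 hp1
  have hDkz : ∀ x ∈ S, ((Y.filter (fun ℓ => x ∈ ℓ)).card : ℤ) ≤ (k:ℤ) := by
    intro x hx; exact_mod_cast hDk x hx
  -- hB
  have hBz : (m:ℤ)*((m:ℤ)-1) + (k:ℤ)*(N:ℤ) ≤ (k:ℤ)*((m:ℤ)*((p:ℤ)+1)) := by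
    have h := sumineq2 (fun x => ((Y.filter (fun ℓ => x ∈ ℓ)).card : ℤ)) ((k:ℤ)+1) (k:ℤ)
      (fun x hx => by nlinarith [mul_nonneg (sub_nonneg.mpr (hDkz x hx)) (sub_nonneg.mpr (hDge x hx))])
    rw [hm1z, hm2z] at h
    linarith
  -- N ≤ m(p+1)
  have hNm : (N:ℤ) ≤ (m:ℤ)*((p:ℤ)+1) := by
    have h := Finset.sum_le_sum hDge
    rw [Finset.sum_const, nsmul_eq_mul, mul_one, hm1z] at h
    exact h
  rcases lt_trichotomy m k with hlt | heq | hgt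
  · exfalso
    have hmk : (m:ℤ) + 1 ≤ (k:ℤ) := by exact_mod_cast hlt
    nlinarith [mul_le_mul_of_nonneg_right hmk (show (0:ℤ) ≤ (p:ℤ)+1 by positivity)]
  · exact heq
  · exfalso
    have hdm := Nat.div_add_mod m k
    have hmod := Nat.mod_lt m hkpos
    have hdmz : (k:ℤ)*((m/k : ℕ):ℤ) + ((m % k : ℕ):ℤ) = (m:ℤ) := by exact_mod_cast hdm
    have hmodz : ((m % k : ℕ):ℤ) < (k:ℤ) := by exact_mod_cast hmod
    have hmodz0 : (0:ℤ) ≤ ((m % k : ℕ):ℤ) := Int.natCast_nonneg _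
    have h7 : ((m/k : ℕ):ℤ)*(k:ℤ) ≤ (m:ℤ) := by linarith [hdmz]
    have h8 : (m:ℤ) ≤ ((m/k : ℕ):ℤ)*(k:ℤ) + (k:ℤ) - 1 := by linarith [hdmz]
    have hAz : 2*((m/k : ℕ):ℤ)*((m:ℤ)*((p:ℤ)+1)) ≤ (m:ℤ)*((m:ℤ)-1) + ((m/k : ℕ):ℤ)*(((m/k : ℕ):ℤ)+1)*(N:ℤ) := by
      have h := sumineq (fun x => ((Y.filter (fun ℓ => x ∈ ℓ)).card : ℤ))
        (2*((m/k : ℕ):ℤ)+1) (((m/k : ℕ):ℤ)*(((m/k : ℕ):ℤ)+1))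
        (fun x hx => by nlinarith [consec_nonneg (((Y.filter (fun ℓ => x ∈ ℓ)).card : ℤ) - ((m/k : ℕ):ℤ))])
      rw [hm1z, hm2z] at h
      linarith
    exact arith_key' (k:ℤ) (p:ℤ) (m:ℤ) (N:ℤ) ((m/k : ℕ):ℤ) hkz (by linarith) (by exact_mod_cast hgt)
      e1 e2 h7 h8 hBz hAz


/-- Lemma 3.7: if a set is simultaneously the union of `m` distinct lines of a
`p`-admissible system `Y` and the union of `k` distinct lines of a `p`-admissible
system `Y'`, and `k(k−1)/2 < p`, then `m = k`. -/
theorem eq_of_union_of_lines_eq {α : Type} [DecidableEq α] (p m k : ℕ)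
    (Y Y' : IncSys α) (hY : IsAdmissible p Y) (hY' : IsAdmissible p Y')
    (T T' : Finset (Finset α)) (hT : T ⊆ Y.lines) (hT' : T' ⊆ Y'.lines)
    (hm : T.card = m) (hkc : T'.card = k)
    (hS : T.sup id = T'.sup id)
    (hp : k * (k - 1) / 2 < p) :
    m = k := by
  obtain ⟨-, hYc, hYi⟩ := hY
  obtain ⟨-, hY'c, hY'i⟩ := hY'
  exact eq_of_union_of_lines_eq' p m k T T'
    (fun ℓ h => hYc ℓ (hT h))
    (fun ℓ₁ h₁ ℓ₂ h₂ hne => hYi ℓ₁ (hT h₁) ℓ₂ (hT h₂) hne)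
    (fun ℓ h => hY'c ℓ (hT' h))
    (fun ℓ₁ h₁ ℓ₂ h₂ hne => hY'i ℓ₁ (hT' h₁) ℓ₂ (hT' h₂) hne)
    hm hkc hS hp
end

section
/- Let p ≥ 2 and let σ be a p-admissible incidence system. Then σ has at most p² + p + 1 lines. -/
/-- Lemma 3.5 (first part): for `p ≥ 2`, a `p`-admissible incidence system has at most
`p² + p + 1` lines. -/
theorem admissible_card_lines_le {α : Type} [DecidableEq α] (p : ℕ) (hp : 2 ≤ p)
    (σ : IncSys α) (hσ : IsAdmissible p σ) :
    σ.lines.card ≤ p ^ 2 + p + 1 := by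
  obtain ⟨hpts, hlc, hint⟩ := hσ
  have hp0 : 0 < p := by omega
  -- every point lies on at most p+1 lines
  have key : ∀ x ∈ σ.pts, (σ.lines.filter (fun ℓ => x ∈ ℓ)).card ≤ p + 1 := by
    intro x hx
    set F := σ.lines.filter (fun ℓ => x ∈ ℓ) with hF
    have hdisj : ∀ a ∈ F, ∀ b ∈ F, a ≠ b → Disjoint (a.erase x) (b.erase x) := by
      intro a ha b hb hab
      simp only [hF, Finset.mem_filter] at ha hb
      have h1 := hint a ha.1 b hb.1 hab
      obtain ⟨z, hz⟩ := Finset.card_eq_one.mp h1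
      refine Finset.disjoint_left.mpr ?_
      intro y hya hyb
      have hy : y ∈ a ∩ b := Finset.mem_inter.mpr
        ⟨Finset.mem_of_mem_erase hya, Finset.mem_of_mem_erase hyb⟩
      have hx' : x ∈ a ∩ b := Finset.mem_inter.mpr ⟨ha.2, hb.2⟩
      rw [hz, Finset.mem_singleton] at hy hx'
      exact (Finset.ne_of_mem_erase hya) (hy.trans hx'.symm)
    have hsub : F.biUnion (fun ℓ => ℓ.erase x) ⊆ σ.pts.erase x := by
      intro y hy
      obtain ⟨ℓ, hℓ, hy⟩ := Finset.mem_biUnion.mp hy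
      simp only [hF, Finset.mem_filter] at hℓ
      exact Finset.mem_erase.mpr ⟨Finset.ne_of_mem_erase hy,
        σ.line_sub ℓ hℓ.1 (Finset.mem_of_mem_erase hy)⟩
    have hbu : (F.biUnion (fun ℓ => ℓ.erase x)).card = F.card * p := by
      rw [Finset.card_biUnion hdisj]
      rw [Finset.sum_congr rfl (fun ℓ hℓ => ?_), Finset.sum_const, smul_eq_mul]
      simp only [hF, Finset.mem_filter] at hℓ
      rw [Finset.card_erase_of_mem hℓ.2, hlc ℓ hℓ.1]
      omega
    have hle : F.card * p ≤ (p + 1) * p := by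
      rw [← hbu]
      calc (F.biUnion (fun ℓ => ℓ.erase x)).card ≤ (σ.pts.erase x).card :=
            Finset.card_le_card hsub
        _ = p ^ 2 + p := by
            rw [Finset.card_erase_of_mem hx, hpts]
            omega
        _ = (p + 1) * p := by ring
    exact Nat.le_of_mul_le_mul_right hle hp0
  -- double counting
  have hcount : σ.lines.card * (p + 1) =
      ∑ x ∈ σ.pts, (σ.lines.filter (fun ℓ => x ∈ ℓ)).card := by
    calc σ.lines.card * (p + 1) = ∑ ℓ ∈ σ.lines, ℓ.card := by
          rw [Finset.sum_congr rfl hlc, Finset.sum_const, smul_eq_mul]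
      _ = ∑ ℓ ∈ σ.lines, ∑ x ∈ σ.pts, (if x ∈ ℓ then 1 else 0) := by
          refine Finset.sum_congr rfl (fun ℓ hℓ => ?_)
          rw [← Finset.card_filter]
          congr 1
          rw [Finset.filter_mem_eq_inter, Finset.inter_eq_right.mpr (σ.line_sub ℓ hℓ)]
      _ = ∑ x ∈ σ.pts, ∑ ℓ ∈ σ.lines, (if x ∈ ℓ then 1 else 0) := Finset.sum_comm
      _ = ∑ x ∈ σ.pts, (σ.lines.filter (fun ℓ => x ∈ ℓ)).card := by
          refine Finset.sum_congr rfl (fun x hx => ?_)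
          rw [Finset.card_filter]
  have hbound : σ.lines.card * (p + 1) ≤ (p ^ 2 + p + 1) * (p + 1) := by
    rw [hcount]
    calc ∑ x ∈ σ.pts, (σ.lines.filter (fun ℓ => x ∈ ℓ)).card
        ≤ ∑ _x ∈ σ.pts, (p + 1) := Finset.sum_le_sum key
      _ = (p ^ 2 + p + 1) * (p + 1) := by rw [Finset.sum_const, smul_eq_mul, hpts]
  exact Nat.le_of_mul_le_mul_right hbound (by omega)
end

section
/- Let p ≥ 2 and let σ be a p-admissible incidence system with exactly p² + p + 1 lines. Then σ is a projective plane of order p; in particular, any two distinct points of σ lie on a unique common line, and every point lies on exactly p + 1 lines. -/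
/-- A projective plane of order `p`, given as an incidence system: `p² + p + 1` points and
lines, every line has `p + 1` points, every point lies on `p + 1` lines, any two distinct
points lie on a unique common line, and any two distinct lines meet in a unique point. -/
def IsProjPlaneOfOrder {α : Type} [DecidableEq α] (p : ℕ) (Y : IncSys α) : Prop :=
  Y.pts.card = p ^ 2 + p + 1 ∧ Y.lines.card = p ^ 2 + p + 1 ∧
    (∀ ℓ ∈ Y.lines, ℓ.card = p + 1) ∧
    (∀ x ∈ Y.pts, (Y.lines.filter (fun ℓ => x ∈ ℓ)).card = p + 1) ∧
    (∀ x ∈ Y.pts, ∀ y ∈ Y.pts, x ≠ y → ∃! ℓ, ℓ ∈ Y.lines ∧ x ∈ ℓ ∧ y ∈ ℓ) ∧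
    (∀ ℓ₁ ∈ Y.lines, ∀ ℓ₂ ∈ Y.lines, ℓ₁ ≠ ℓ₂ → ∃! x, x ∈ ℓ₁ ∧ x ∈ ℓ₂)

/-- Lemma 3.5 (second part): for `p ≥ 2`, a `p`-admissible incidence system with exactly
`p² + p + 1` lines is a projective plane of order `p`; in particular, any two distinct
points lie on a unique common line and every point lies on exactly `p + 1` lines. -/
theorem admissible_max_lines_is_proj_plane {α : Type} [DecidableEq α] (p : ℕ) (hp : 2 ≤ p)
    (σ : IncSys α) (hσ : IsAdmissible p σ) (hcard : σ.lines.card = p ^ 2 + p + 1) :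
    IsProjPlaneOfOrder p σ ∧
      (∀ x ∈ σ.pts, ∀ y ∈ σ.pts, x ≠ y → ∃! ℓ, ℓ ∈ σ.lines ∧ x ∈ ℓ ∧ y ∈ ℓ) ∧
      (∀ x ∈ σ.pts, (σ.lines.filter (fun ℓ => x ∈ ℓ)).card = p + 1) := by
  classical
  obtain ⟨hpts, hlen, hmeet⟩ := hσ
  set r : α → ℕ := fun x => (σ.lines.filter (fun ℓ => x ∈ ℓ)).card with hr
  -- Step A: incidence double count
  have hsum1 : ∑ x ∈ σ.pts, r x = (p ^ 2 + p + 1) * (p + 1) := by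
    have h1 : ∑ x ∈ σ.pts, r x
        = ∑ x ∈ σ.pts, ∑ ℓ ∈ σ.lines, if x ∈ ℓ then 1 else 0 := by
      exact Finset.sum_congr rfl fun x _ => Finset.card_filter _ _
    rw [h1, Finset.sum_comm]
    have h2 : ∀ ℓ ∈ σ.lines, (∑ x ∈ σ.pts, if x ∈ ℓ then 1 else 0) = p + 1 := by
      intro ℓ hℓ
      rw [← Finset.card_filter]
      have hfe : σ.pts.filter (fun x => x ∈ ℓ) = ℓ := by
        ext a
        simp only [Finset.mem_filter]
        exact ⟨fun h => h.2, fun h => ⟨σ.line_sub ℓ hℓ h, h⟩⟩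
      rw [hfe]; exact hlen ℓ hℓ
    rw [Finset.sum_congr rfl h2, Finset.sum_const, hcard, smul_eq_mul]
  -- Step B: ordered pair double count
  have hfib : ∀ x : α, σ.lines.offDiag.filter (fun q => x ∈ q.1 ∧ x ∈ q.2)
      = (σ.lines.filter (fun ℓ => x ∈ ℓ)).offDiag := by
    intro x; ext q
    simp only [Finset.mem_filter, Finset.mem_offDiag]
    tauto
  have hdisj : ∀ x ∈ σ.pts, ∀ y ∈ σ.pts, x ≠ y →
      Disjoint (σ.lines.offDiag.filter (fun q => x ∈ q.1 ∧ x ∈ q.2))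
        (σ.lines.offDiag.filter (fun q => y ∈ q.1 ∧ y ∈ q.2)) := by
    intro x _ y _ hxy
    rw [Finset.disjoint_left]
    rintro q hq1 hq2
    obtain ⟨hq, hx1, hx2⟩ := Finset.mem_filter.mp hq1
    obtain ⟨-, hy1, hy2⟩ := Finset.mem_filter.mp hq2
    obtain ⟨h1, h2, hne⟩ := Finset.mem_offDiag.mp hq
    have hsub : ({x, y} : Finset α) ⊆ q.1 ∩ q.2 := by
      intro b hb
      rcases Finset.mem_insert.mp hb with rfl | hb
      · exact Finset.mem_inter.mpr ⟨hx1, hx2⟩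
      · rw [Finset.mem_singleton.mp hb]
        exact Finset.mem_inter.mpr ⟨hy1, hy2⟩
    have hle := Finset.card_le_card hsub
    rw [Finset.card_pair hxy, hmeet q.1 h1 q.2 h2 hne] at hle
    omega
  have hcover : σ.lines.offDiag
      = σ.pts.biUnion (fun x => σ.lines.offDiag.filter (fun q => x ∈ q.1 ∧ x ∈ q.2)) := by
    ext q
    simp only [Finset.mem_biUnion, Finset.mem_filter]
    constructor
    · intro hq
      obtain ⟨h1, h2, hne⟩ := Finset.mem_offDiag.mp hq
      obtain ⟨a, ha⟩ := Finset.card_eq_one.mp (hmeet q.1 h1 q.2 h2 hne)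
      have hax : a ∈ q.1 ∩ q.2 := ha ▸ Finset.mem_singleton_self a
      obtain ⟨ha1, ha2⟩ := Finset.mem_inter.mp hax
      exact ⟨a, σ.line_sub q.1 h1 ha1, hq, ha1, ha2⟩
    · rintro ⟨a, -, h, -, -⟩; exact h
  have hsum2 : ∑ x ∈ σ.pts, (r x * r x - r x)
      = (p ^ 2 + p + 1) * (p ^ 2 + p + 1) - (p ^ 2 + p + 1) := by
    have h1 := (Finset.card_biUnion hdisj).symm
    rw [← hcover, Finset.offDiag_card, hcard] at h1
    rw [← h1]
    refine Finset.sum_congr rfl fun x _ => ?_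
    rw [hfib x, Finset.offDiag_card]
  -- Step C: variance argument
  have key : ∀ x ∈ σ.pts, r x = p + 1 := by
    have e1 : (∑ x ∈ σ.pts, (r x : ℤ)) = ((p:ℤ) ^ 2 + p + 1) * (p + 1) := by
      exact_mod_cast congrArg (Nat.cast : ℕ → ℤ) hsum1
    have hrle : ∀ x : α, r x ≤ r x * r x := by
      intro x
      rcases Nat.eq_zero_or_pos (r x) with h | h
      · simp [h]
      · exact Nat.le_mul_of_pos_left _ h
    have e2 : (∑ x ∈ σ.pts, ((r x : ℤ) * r x - r x))
        = ((p:ℤ) ^ 2 + p + 1) * ((p:ℤ) ^ 2 + p + 1) - ((p:ℤ) ^ 2 + p + 1) := by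
      have h1 : (∑ x ∈ σ.pts, ((r x : ℤ) * r x - r x))
          = ∑ x ∈ σ.pts, ((r x * r x - r x : ℕ) : ℤ) := by
        refine Finset.sum_congr rfl fun x _ => ?_
        rw [Nat.cast_sub (hrle x)]; push_cast; ring
      rw [h1, ← Nat.cast_sum, hsum2, Nat.cast_sub (by nlinarith)]
      push_cast; ring
    have hz : ∑ x ∈ σ.pts, ((r x : ℤ) - (p + 1)) ^ 2 = 0 := by
      have expand : ∀ x ∈ σ.pts, ((r x : ℤ) - (p + 1)) ^ 2
          = (((r x : ℤ) * r x - r x) - (2 * p + 1) * (r x)) + (p + 1) ^ 2 :=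
        fun x _ => by ring
      rw [Finset.sum_congr rfl expand, Finset.sum_add_distrib, Finset.sum_sub_distrib,
        e2, ← Finset.mul_sum, e1, Finset.sum_const, hpts, nsmul_eq_mul]
      push_cast; ring
    intro x hx
    have h0 := (Finset.sum_eq_zero_iff_of_nonneg (fun i _ => sq_nonneg _)).mp hz x hx
    have h1 : (r x : ℤ) - (p + 1) = 0 := by
      have := sq_eq_zero_iff.mp h0; exact this
    have : (r x : ℤ) = p + 1 := by linarith
    exact_mod_cast this
  -- Step D: unique line through two points
  have unique_line : ∀ x ∈ σ.pts, ∀ y ∈ σ.pts, x ≠ y →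
      ∃! ℓ, ℓ ∈ σ.lines ∧ x ∈ ℓ ∧ y ∈ ℓ := by
    intro x hx y hy hxy
    set Lx := σ.lines.filter (fun ℓ => x ∈ ℓ) with hLx
    have hLxcard : Lx.card = p + 1 := key x hx
    have hdisj2 : ∀ ℓ₁ ∈ Lx, ∀ ℓ₂ ∈ Lx, ℓ₁ ≠ ℓ₂ →
        Disjoint (ℓ₁.erase x) (ℓ₂.erase x) := by
      intro ℓ₁ h1 ℓ₂ h2 hne
      obtain ⟨hm1, hx1⟩ := Finset.mem_filter.mp h1
      obtain ⟨hm2, hx2⟩ := Finset.mem_filter.mp h2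
      rw [Finset.disjoint_left]
      intro a ha1 ha2
      obtain ⟨hax, ha1'⟩ := Finset.mem_erase.mp ha1
      obtain ⟨-, ha2'⟩ := Finset.mem_erase.mp ha2
      have hsub : ({a, x} : Finset α) ⊆ ℓ₁ ∩ ℓ₂ := by
        intro b hb
        rcases Finset.mem_insert.mp hb with rfl | hb
        · exact Finset.mem_inter.mpr ⟨ha1', ha2'⟩
        · rw [Finset.mem_singleton.mp hb]
          exact Finset.mem_inter.mpr ⟨hx1, hx2⟩
      have hle := Finset.card_le_card hsub
      rw [Finset.card_pair hax, hmeet ℓ₁ hm1 ℓ₂ hm2 hne] at hle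
      omega
    have hU : Lx.biUnion (fun ℓ => ℓ.erase x) = σ.pts.erase x := by
      apply Finset.eq_of_subset_of_card_le
      · intro a ha
        obtain ⟨ℓ, hℓ, ha⟩ := Finset.mem_biUnion.mp ha
        obtain ⟨hm, -⟩ := Finset.mem_filter.mp hℓ
        obtain ⟨hax, ha'⟩ := Finset.mem_erase.mp ha
        exact Finset.mem_erase.mpr ⟨hax, σ.line_sub ℓ hm ha'⟩
      · rw [Finset.card_biUnion hdisj2, Finset.card_erase_of_mem hx, hpts]
        have hterm : ∀ ℓ ∈ Lx, (ℓ.erase x).card = p := by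
          intro ℓ hℓ
          obtain ⟨hm, hxm⟩ := Finset.mem_filter.mp hℓ
          rw [Finset.card_erase_of_mem hxm, hlen ℓ hm]
          omega
        rw [Finset.sum_congr rfl hterm, Finset.sum_const, hLxcard, smul_eq_mul]
        ring_nf
        omega
    have hyU : y ∈ Lx.biUnion (fun ℓ => ℓ.erase x) := by
      rw [hU]; exact Finset.mem_erase.mpr ⟨Ne.symm hxy, hy⟩
    obtain ⟨ℓ, hℓ, hyℓ⟩ := Finset.mem_biUnion.mp hyU
    obtain ⟨hm, hxm⟩ := Finset.mem_filter.mp hℓ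
    refine ⟨ℓ, ⟨hm, hxm, (Finset.mem_erase.mp hyℓ).2⟩, ?_⟩
    rintro ℓ' ⟨hm', hx', hy'⟩
    by_contra hne
    have hsub : ({x, y} : Finset α) ⊆ ℓ' ∩ ℓ := by
      intro b hb
      rcases Finset.mem_insert.mp hb with rfl | hb
      · exact Finset.mem_inter.mpr ⟨hx', hxm⟩
      · rw [Finset.mem_singleton.mp hb]
        exact Finset.mem_inter.mpr ⟨hy', (Finset.mem_erase.mp hyℓ).2⟩
    have hle := Finset.card_le_card hsub
    rw [Finset.card_pair hxy, hmeet ℓ' hm' ℓ hm hne] at hle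
    omega
  -- lines meet in a unique point
  have lines_meet : ∀ ℓ₁ ∈ σ.lines, ∀ ℓ₂ ∈ σ.lines, ℓ₁ ≠ ℓ₂ →
      ∃! x, x ∈ ℓ₁ ∧ x ∈ ℓ₂ := by
    intro ℓ₁ h1 ℓ₂ h2 hne
    obtain ⟨a, ha⟩ := Finset.card_eq_one.mp (hmeet ℓ₁ h1 ℓ₂ h2 hne)
    have hax := Finset.mem_inter.mp (ha ▸ Finset.mem_singleton_self a)
    refine ⟨a, hax, fun b hb => ?_⟩
    have : b ∈ ℓ₁ ∩ ℓ₂ := Finset.mem_inter.mpr hb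
    rw [ha, Finset.mem_singleton] at this
    exact this
  exact ⟨⟨hpts, hcard, hlen, key, unique_line, lines_meet⟩, unique_line, key⟩
end

section
/- Let π be a projective plane of prime order p with point set P, and let C_p(π) ⊆ F_p^P be the span of the indicator functions of lines. A word w ∈ F_p^P belongs to C_p(π) if and only if ⟨w, ℓ⟩ = ⟨w, 1⟩ for every line ℓ of π, where 1 is the all-ones vector. -/
/-- A projective plane of order `p` on a finite point type `P`, with set of lines `L`:
`p² + p + 1` points, each line has `p + 1` points, each point lies on `p + 1` lines, any
two distinct points lie on a unique line, and any two distinct lines meet in a unique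
point. -/
def IsProjPlane {P : Type} [Fintype P] [DecidableEq P] (p : ℕ) (L : Finset (Finset P)) :
    Prop :=
  Fintype.card P = p ^ 2 + p + 1 ∧ (∀ ℓ ∈ L, ℓ.card = p + 1) ∧
    (∀ x : P, (L.filter (fun ℓ => x ∈ ℓ)).card = p + 1) ∧
    (∀ x y : P, x ≠ y → ∃! ℓ, ℓ ∈ L ∧ x ∈ ℓ ∧ y ∈ ℓ) ∧
    (∀ ℓ₁ ∈ L, ∀ ℓ₂ ∈ L, ℓ₁ ≠ ℓ₂ → ∃! x : P, x ∈ ℓ₁ ∧ x ∈ ℓ₂)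

/-!
The code `C` lies in the space `D` of words whose line sums all equal their total sum, because two
lines meet in `1 ≡ p + 1` points. Conversely `D ⊆ C^⊥ + ⟨1⟩`, so it suffices that
`dim C^⊥ + 1 ≤ dim C = |P| - dim C^⊥`, i.e. `2 dim C^⊥ < |P|`. This is read off the integer
incidence matrix `N`, made square by `#L = #P`: from `N Nᵀ = p I + J` we get
`(det N)² = p^(p² + p) (p + 1)²`, whereas a `k`-dimensional kernel of `N mod p` forces
`p^k ∣ det N`.
-/

open Module Matrix Finset

theorem Matrix.det_scalar_add_vecMulVec {n R : Type*} [Fintype n] [DecidableEq n] [CommRing R]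
    (a : R) (u v : n → R) :
    (scalar n a + vecMulVec u v).det =
      a ^ Fintype.card n + (u ⬝ᵥ v) * a ^ (Fintype.card n - 1) := by
  have h := eval_charpoly (vecMulVec (-u) v) a
  rw [charpoly_vecMulVec] at h
  simpa [sub_eq_add_neg, neg_vecMulVec] using h.symm

theorem Matrix.pow_card_dvd_det_of_dvd_col {n R : Type*} [Fintype n] [DecidableEq n] [CommRing R]
    {M : Matrix n n R} {a : R} (s : Finset n) (h : ∀ i, ∀ j ∈ s, a ∣ M i j) :
    a ^ s.card ∣ M.det := by
  choose! W hW using h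
  obtain ⟨W', rfl⟩ : ∃ W' : Matrix n n R, M = of fun i j => (if j ∈ s then a else 1) * W' i j :=
    ⟨of fun i j => if j ∈ s then W i j else M i j, by
      ext i j; by_cases hj : j ∈ s <;> simp [hj, hW i j]⟩
  rw [det_mul_row, prod_ite_mem, univ_inter, prod_const]
  exact dvd_mul_right _ _

theorem Submodule.exists_basis_finset_mem {F n : Type*} [Field F] [Fintype n]
    (K : Submodule F (n → F)) :
    ∃ (b : Basis n F (n → F)) (s : Finset n), s.card = finrank F K ∧ ∀ j ∈ s, b j ∈ K := by
  obtain ⟨q, hq⟩ := K.exists_isCompl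
  let b := ((finBasis F K).prod (finBasis F q)).map (K.prodEquivOfIsCompl q hq)
  let e := b.indexEquiv (Pi.basisFun F n)
  refine ⟨b.reindex e, univ.map (Function.Embedding.inl.trans e.toEmbedding), by simp, ?_⟩
  simp [b, Basis.prod_apply]

theorem Matrix.pow_finrank_ker_dvd_det {n : Type*} [Fintype n] [DecidableEq n] {p : ℕ}
    [Fact p.Prime] (M : Matrix n n ℤ) :
    (p : ℤ) ^ finrank (ZMod p) (LinearMap.ker (M.map (Int.cast : ℤ → ZMod p)).mulVecLin) ∣
      M.det := by
  obtain ⟨b, s, hs, hbK⟩ :=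
    (LinearMap.ker (M.map (Int.cast : ℤ → ZMod p)).mulVecLin).exists_basis_finset_mem
  -- `V` lifts the change of basis to `b`, so the columns of `M * V` indexed by `s` vanish mod `p`.
  let V : Matrix n n ℤ := of fun i j => ((b j i).val : ℤ)
  have hV : V.map (Int.cast : ℤ → ZMod p) = (Pi.basisFun (ZMod p) n).toMatrix b := by
    ext i j; simp [V, Basis.toMatrix_apply]
  have hVdet : ¬ (p : ℤ) ∣ V.det := by
    rw [← ZMod.intCast_zmod_eq_zero_iff_dvd, Int.cast_det, hV, ← Basis.det_apply]
    exact ((Pi.basisFun _ n).is_basis_iff_det.mp ⟨b.linearIndependent, b.span_eq⟩).ne_zero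
  have hcols : ∀ i, ∀ j ∈ s, (p : ℤ) ∣ (M * V) i j := by
    intro i j hj
    have hcol : (M.map (Int.cast : ℤ → ZMod p)) *ᵥ b j = 0 := hbK j hj
    rw [← ZMod.intCast_zmod_eq_zero_iff_dvd]
    simpa [V, mul_apply, mulVec, dotProduct] using congrFun hcol i
  have hdvd := pow_card_dvd_det_of_dvd_col s hcols
  rw [det_mul, hs] at hdvd
  exact ((Nat.prime_iff_prime_int.mp Fact.out).coprime_iff_not_dvd.mpr hVdet).pow_left
    |>.dvd_of_dvd_mul_right hdvd

section ProjectivePlane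

variable {P : Type} [Fintype P] [DecidableEq P]

def incidenceMatrix (R : Type*) [Zero R] [One R] (L : Finset (Finset P)) : Matrix L P R :=
  of fun ℓ x => if x ∈ (ℓ : Finset P) then 1 else 0

def lineCode (R : Type*) [CommRing R] (L : Finset (Finset P)) : Submodule R (P → R) :=
  Submodule.span R {v | ∃ ℓ ∈ L, v = fun x => if x ∈ ℓ then 1 else 0}

def dualLineCode (R : Type*) [CommRing R] (L : Finset (Finset P)) : Submodule R (P → R) :=
  LinearMap.ker (incidenceMatrix R L).mulVecLin

def lineSumsEqTotal (R : Type*) [CommRing R] (L : Finset (Finset P)) : Submodule R (P → R) where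
  carrier := {w | ∀ ℓ ∈ L, ∑ x ∈ ℓ, w x = ∑ x, w x}
  add_mem' hu hv ℓ hℓ := by simp [sum_add_distrib, hu ℓ hℓ, hv ℓ hℓ]
  zero_mem' := by simp
  smul_mem' c u hu ℓ hℓ := by simp [← mul_sum, hu ℓ hℓ]

theorem incidenceMatrix_mulVec_apply {R : Type*} [CommRing R] (L : Finset (Finset P))
    (u : P → R) (ℓ : L) : (incidenceMatrix R L *ᵥ u) ℓ = ∑ x ∈ (ℓ : Finset P), u x := by
  simp [incidenceMatrix, mulVec, dotProduct, ite_mul, sum_ite_mem]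

theorem incidenceMatrix_mul_transpose_apply {R : Type*} [CommRing R] (L : Finset (Finset P))
    (ℓ m : L) :
    (incidenceMatrix R L * (incidenceMatrix R L)ᵀ) ℓ m = ((ℓ ∩ m : Finset P).card : R) := by
  simp [incidenceMatrix, mul_apply, inter_comm]

theorem mem_dualLineCode {R : Type*} [CommRing R] {L : Finset (Finset P)} {u : P → R} :
    u ∈ dualLineCode R L ↔ ∀ ℓ ∈ L, ∑ x ∈ ℓ, u x = 0 := by
  simp [dualLineCode, funext_iff, incidenceMatrix_mulVec_apply]

theorem finrank_lineCode_add_finrank_dualLineCode (F : Type*) [Field F]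
    (L : Finset (Finset P)) :
    finrank F (lineCode F L) + finrank F (dualLineCode F L) = Fintype.card P := by
  have hrows : Set.range (incidenceMatrix F L).row =
      {v | ∃ ℓ ∈ L, v = fun x => if x ∈ ℓ then 1 else 0} := by
    ext v
    constructor
    · rintro ⟨ℓ, rfl⟩
      exact ⟨ℓ, ℓ.2, rfl⟩
    · rintro ⟨ℓ, hℓ, rfl⟩
      exact ⟨⟨ℓ, hℓ⟩, rfl⟩
  rw [lineCode, ← hrows, ← rank_eq_finrank_span_row, dualLineCode, rank,
    LinearMap.finrank_range_add_finrank_ker, finrank_fintype_fun_eq_card]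

namespace IsProjPlane

variable {p : ℕ} {L : Finset (Finset P)}

theorem card_lines (hπ : IsProjPlane p L) : L.card = Fintype.card P := by
  obtain ⟨-, hline, hpencil, -⟩ := hπ
  have hflags : Fintype.card P * (p + 1) = L.card * (p + 1) := by
    simpa [bipartiteAbove, bipartiteBelow, hpencil, sum_const_nat hline] using
      sum_card_bipartiteAbove_eq_sum_card_bipartiteBelow (s := univ) (t := L) (fun x ℓ => x ∈ ℓ)
  exact (Nat.eq_of_mul_eq_mul_right p.succ_pos hflags).symm

theorem card_inter_eq_one (hπ : IsProjPlane p L) {ℓ m : Finset P} (hℓ : ℓ ∈ L) (hm : m ∈ L)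
    (hne : ℓ ≠ m) : (ℓ ∩ m).card = 1 := by
  obtain ⟨x, hx, hxu⟩ := hπ.2.2.2.2 ℓ hℓ m hm hne
  exact card_eq_one.mpr
    ⟨x, eq_singleton_iff_unique_mem.mpr ⟨mem_inter.mpr hx, fun y hy => hxu y (mem_inter.mp hy)⟩⟩

theorem natCast_card_eq_one (hπ : IsProjPlane p L) {ℓ : Finset P} (hℓ : ℓ ∈ L) :
    (ℓ.card : ZMod p) = 1 := by
  simp [hπ.2.1 ℓ hℓ]

theorem natCast_card_inter_eq_one (hπ : IsProjPlane p L) {ℓ m : Finset P} (hℓ : ℓ ∈ L)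
    (hm : m ∈ L) : ((ℓ ∩ m).card : ZMod p) = 1 := by
  by_cases h : ℓ = m
  · rw [h, inter_self, hπ.natCast_card_eq_one hm]
  · rw [hπ.card_inter_eq_one hℓ hm h, Nat.cast_one]

theorem incidenceMatrix_mul_transpose (R : Type*) [CommRing R] (hπ : IsProjPlane p L) :
    incidenceMatrix R L * (incidenceMatrix R L)ᵀ = scalar L (p : R) + vecMulVec 1 1 := by
  ext ℓ m
  rw [incidenceMatrix_mul_transpose_apply, Matrix.add_apply, scalar_apply, diagonal_apply,
    vecMulVec_apply, Pi.one_apply, Pi.one_apply, mul_one]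
  by_cases h : ℓ = m
  · subst h
    simp [hπ.2.1 ℓ ℓ.2]
  · simp [hπ.card_inter_eq_one ℓ.2 m.2 (Subtype.coe_ne_coe.mpr h), h]

theorem det_submatrix_incidenceMatrix_sq (hπ : IsProjPlane p L) (e : P ≃ L) :
    ((incidenceMatrix ℤ L).submatrix e id).det ^ 2 = (p : ℤ) ^ (p ^ 2 + p) * (p + 1) ^ 2 := by
  set N := incidenceMatrix ℤ L
  calc (N.submatrix e id).det ^ 2 = (N.submatrix e id * (N.submatrix e id)ᵀ).det := by
        rw [det_mul, det_transpose, sq]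
    _ = ((N * Nᵀ).submatrix e e).det := by
        rw [transpose_submatrix, submatrix_mul _ _ _ _ _ Function.bijective_id]
    _ = (N * Nᵀ).det := det_submatrix_equiv_self e _
    _ = (p : ℤ) ^ (p ^ 2 + p + 1) + (p ^ 2 + p + 1) * p ^ (p ^ 2 + p) := by
        rw [hπ.incidenceMatrix_mul_transpose ℤ, det_scalar_add_vecMulVec, Fintype.card_coe,
          hπ.card_lines, hπ.1]
        simp [dotProduct, hπ.card_lines, hπ.1]
    _ = (p : ℤ) ^ (p ^ 2 + p) * (p + 1) ^ 2 := by ring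

theorem two_mul_finrank_dualLineCode_le (hp : p.Prime) (hπ : IsProjPlane p L) :
    2 * finrank (ZMod p) (dualLineCode (ZMod p) L) ≤ p ^ 2 + p := by
  have := Fact.mk hp
  have hprime : Prime (p : ℤ) := Nat.prime_iff_prime_int.mp hp
  let e : P ≃ L := Fintype.equivOfCardEq (by rw [Fintype.card_coe, hπ.card_lines])
  set M := (incidenceMatrix ℤ L).submatrix e id
  have hker :
      LinearMap.ker (M.map (Int.cast : ℤ → ZMod p)).mulVecLin = dualLineCode (ZMod p) L := by
    ext u
    have hrow : ∀ x, (M.map Int.cast *ᵥ u) x = (incidenceMatrix (ZMod p) L *ᵥ u) (e x) := by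
      intro x
      simp [M, mulVec, dotProduct, incidenceMatrix, apply_ite]
    rw [LinearMap.mem_ker, mulVecLin_apply, mem_dualLineCode, funext_iff]
    simp only [hrow, incidenceMatrix_mulVec_apply, Pi.zero_apply]
    rw [e.forall_congr_left, Subtype.forall]
    simp only [Equiv.apply_symm_apply]
  have hdvd : (p : ℤ) ^ (2 * finrank (ZMod p) (dualLineCode (ZMod p) L)) ∣
      (p : ℤ) ^ (p ^ 2 + p) * (p + 1) ^ 2 := by
    rw [← hπ.det_submatrix_incidenceMatrix_sq e, mul_comm, pow_mul, ← hker]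
    exact pow_dvd_pow_of_dvd M.pow_finrank_ker_dvd_det 2
  have hcop : IsCoprime (p : ℤ) (p + 1) := ⟨-1, 1, by ring⟩
  exact (pow_dvd_pow_iff hprime.ne_zero hprime.not_isUnit).mp
    ((hcop.pow (m := 2 * _) (n := 2)).dvd_of_dvd_mul_right hdvd)

theorem lineCode_le_lineSumsEqTotal (hπ : IsProjPlane p L) :
    lineCode (ZMod p) L ≤ lineSumsEqTotal (ZMod p) L := by
  rw [lineCode, Submodule.span_le]
  rintro _ ⟨m, hm, rfl⟩ ℓ hℓ
  simp only [sum_ite_mem, sum_const, univ_inter, nsmul_eq_mul, mul_one]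
  rw [hπ.natCast_card_inter_eq_one hℓ hm, hπ.natCast_card_eq_one hm]

theorem lineSumsEqTotal_le_dualLineCode_sup (hπ : IsProjPlane p L) :
    lineSumsEqTotal (ZMod p) L ≤ dualLineCode (ZMod p) L ⊔ Submodule.span (ZMod p) {1} := by
  intro w hw
  have hw' : w - (∑ x, w x) • 1 ∈ dualLineCode (ZMod p) L := by
    refine mem_dualLineCode.mpr fun ℓ hℓ => ?_
    simp [sum_sub_distrib, hw ℓ hℓ, hπ.natCast_card_eq_one hℓ]
  simpa using Submodule.add_mem_sup hw'
    (Submodule.smul_mem _ (∑ x, w x) (Submodule.mem_span_singleton_self (1 : P → ZMod p)))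

theorem lineCode_eq_lineSumsEqTotal (hp : p.Prime) (hπ : IsProjPlane p L) :
    lineCode (ZMod p) L = lineSumsEqTotal (ZMod p) L := by
  have := Fact.mk hp
  have hrank := finrank_lineCode_add_finrank_dualLineCode (ZMod p) L
  have hdual := hπ.two_mul_finrank_dualLineCode_le hp
  have hone : finrank (ZMod p) (Submodule.span (ZMod p) {(1 : P → ZMod p)}) ≤ 1 :=
    (finrank_span_le_card _).trans (by simp)
  have hsum : finrank (ZMod p) (lineSumsEqTotal (ZMod p) L) ≤
      finrank (ZMod p) (dualLineCode (ZMod p) L) + 1 :=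
    (Submodule.finrank_mono hπ.lineSumsEqTotal_le_dualLineCode_sup).trans <|
      (Submodule.finrank_add_le_finrank_add_finrank _ _).trans (Nat.add_le_add_left hone _)
  refine Submodule.eq_of_le_of_finrank_le hπ.lineCode_le_lineSumsEqTotal ?_
  rw [hπ.1] at hrank
  omega

end IsProjPlane

end ProjectivePlane

/-- Lemma 3.1: a word `w ∈ F_p^P` lies in the `p`-ary code of a projective plane `π` of
prime order `p` if and only if `⟨w, ℓ⟩ = ⟨w, 1⟩` for every line `ℓ` of `π`. -/
theorem mem_code_iff_inner_const (p : ℕ) (hp : p.Prime) {P : Type} [Fintype P]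
    [DecidableEq P] (L : Finset (Finset P)) (hπ : IsProjPlane p L) (w : P → ZMod p) :
    w ∈ Submodule.span (ZMod p)
        {v : P → ZMod p | ∃ ℓ ∈ L, v = fun x => if x ∈ ℓ then (1 : ZMod p) else 0} ↔
      ∀ ℓ ∈ L, ∑ x ∈ ℓ, w x = ∑ x : P, w x :=
  SetLike.ext_iff.mp (hπ.lineCode_eq_lineSumsEqTotal hp) w
end

section
/- Let π and σ be two projective planes of the same prime order p on sets of points, and suppose they share at least p² + 1 common lines (as point sets). Then π and σ have the same point set and the same set of lines, i.e., π = σ. -/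
/-!
A point of `π` lies on `p + 1` lines of `π`, at most `p` of which are not lines of `σ`, so it is
a point of `σ`. If a line `ℓ` of `π` were not a line of `σ`, then no line of `σ` meeting `ℓ` in
two points could be a line of `π`, so there would be at most `p` such secants. But any two points
of `ℓ` lie on a common line of `σ` and no line of `σ` contains `ℓ`, so by the de Bruijn–Erdős
theorem there are at least `|ℓ| = p + 1` secants.
-/

open Finset

/-- The de Bruijn–Erdős theorem, obtained from `Configuration.HasLines.card_le` for the
configuration whose points are `V` and whose lines are the blocks of `F`. -/
theorem Finset.card_le_card_of_covers_pairs {α : Type*} {V : Finset α} {F : Finset (Finset α)}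
    (hV : V.Nontrivial) (hcover : ∀ x ∈ V, ∀ y ∈ V, x ≠ y → ∃ m ∈ F, x ∈ m ∧ y ∈ m)
    (hunique : ∀ m₁ ∈ F, ∀ m₂ ∈ F, ∀ x ∈ V, ∀ y ∈ V,
      x ∈ m₁ → y ∈ m₁ → x ∈ m₂ → y ∈ m₂ → x = y ∨ m₁ = m₂)
    (hproper : ∀ m ∈ F, ¬V ⊆ m) : #V ≤ #F := by
  choose! line hline hxline hyline using hcover
  have exists_not_mem (x : α) (hx : x ∈ V) : ∃ m ∈ F, x ∉ m := by
    obtain ⟨y, hy, hyx⟩ := hV.exists_ne x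
    have hxy : x ≠ y := hyx.symm
    obtain ⟨z, hz, hzxy⟩ := not_subset.mp (hproper _ (hline x hx y hy hxy))
    have hyz : y ≠ z := by rintro rfl; exact hzxy (hyline x hx y hy hxy)
    refine ⟨line y z, hline y hy z hz hyz, fun hxyz => hzxy ?_⟩
    obtain h | h := hunique _ (hline x hx y hy hxy) _ (hline y hy z hz hyz) x hx y hy
      (hxline x hx y hy hxy) (hyline x hx y hy hxy) hxyz (hxline y hy z hz hyz)
    · exact absurd h hxy
    · exact h ▸ hyline y hy z hz hyz
  let _ : Membership V F := ⟨fun m x => x.1 ∈ m.1⟩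
  let _ : Configuration.HasLines V F :=
    { exists_point := fun m => by
        obtain ⟨x, hx, hxm⟩ := not_subset.mp (hproper m m.2)
        exact ⟨⟨x, hx⟩, hxm⟩
      exists_line := fun x => by
        obtain ⟨m, hm, hxm⟩ := exists_not_mem x x.2
        exact ⟨⟨m, hm⟩, hxm⟩
      eq_or_eq := fun {x y m₁ m₂} hx₁ hy₁ hx₂ hy₂ => by
        rw [Subtype.ext_iff, Subtype.ext_iff]
        exact hunique m₁ m₁.2 m₂ m₂.2 x x.2 y y.2 hx₁ hy₁ hx₂ hy₂
      mkLine := fun {x y} h => ⟨line x y, hline x x.2 y y.2 (Subtype.coe_ne_coe.mpr h)⟩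
      mkLine_ax := fun {x y} h =>
        ⟨hxline x x.2 y y.2 (Subtype.coe_ne_coe.mpr h),
          hyline x x.2 y y.2 (Subtype.coe_ne_coe.mpr h)⟩ }
  simpa using Configuration.HasLines.card_le V F

def IncSys.secants {α : Type} [DecidableEq α] (Y : IncSys α) (s : Finset α) :
    Finset (Finset α) :=
  Y.lines.filter fun m => 1 < #(m ∩ s)

namespace IsProjPlaneOfOrder

variable {α : Type} [DecidableEq α] {p : ℕ} {Y : IncSys α}

theorem card_lines (hY : IsProjPlaneOfOrder p Y) : #Y.lines = p ^ 2 + p + 1 :=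
  hY.2.1

theorem card_line (hY : IsProjPlaneOfOrder p Y) {ℓ : Finset α} (hℓ : ℓ ∈ Y.lines) :
    #ℓ = p + 1 :=
  hY.2.2.1 ℓ hℓ

theorem card_lines_through (hY : IsProjPlaneOfOrder p Y) {x : α} (hx : x ∈ Y.pts) :
    #(Y.lines.filter (x ∈ ·)) = p + 1 :=
  hY.2.2.2.1 x hx

theorem exists_line_mem_mem (hY : IsProjPlaneOfOrder p Y) {x y : α} (hx : x ∈ Y.pts)
    (hy : y ∈ Y.pts) (hxy : x ≠ y) : ∃ ℓ ∈ Y.lines, x ∈ ℓ ∧ y ∈ ℓ := by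
  obtain ⟨ℓ, hℓ, -⟩ := hY.2.2.2.2.1 x hx y hy hxy
  exact ⟨ℓ, hℓ⟩

theorem eq_or_eq (hY : IsProjPlaneOfOrder p Y) {ℓ₁ ℓ₂ : Finset α} (hℓ₁ : ℓ₁ ∈ Y.lines)
    (hℓ₂ : ℓ₂ ∈ Y.lines) {x y : α} (hx₁ : x ∈ ℓ₁) (hy₁ : y ∈ ℓ₁) (hx₂ : x ∈ ℓ₂)
    (hy₂ : y ∈ ℓ₂) : x = y ∨ ℓ₁ = ℓ₂ := by
  by_contra! h
  obtain ⟨z, -, hz⟩ := hY.2.2.2.2.2 ℓ₁ hℓ₁ ℓ₂ hℓ₂ h.2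
  exact h.1 ((hz x ⟨hx₁, hx₂⟩).trans (hz y ⟨hy₁, hy₂⟩).symm)

theorem pts_subset_of_card_lines_sdiff_le (hY : IsProjPlaneOfOrder p Y) (Z : IncSys α)
    (hd : #(Y.lines \ Z.lines) ≤ p) : Y.pts ⊆ Z.pts := by
  intro x hx
  obtain ⟨ℓ, hℓ, hxℓ⟩ : ∃ ℓ ∈ Y.lines ∩ Z.lines, x ∈ ℓ := by
    by_contra! h
    have hsub : Y.lines.filter (x ∈ ·) ⊆ Y.lines \ Z.lines := fun ℓ hℓ => by
      rw [mem_filter] at hℓ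
      exact mem_sdiff.mpr ⟨hℓ.1, fun hℓZ => h ℓ (mem_inter.mpr ⟨hℓ.1, hℓZ⟩) hℓ.2⟩
    have := card_le_card hsub
    rw [hY.card_lines_through hx] at this
    omega
  exact Z.line_sub ℓ (mem_inter.mp hℓ).2 hxℓ

theorem secants_subset_lines_sdiff (hY : IsProjPlaneOfOrder p Y) (Z : IncSys α)
    {ℓ : Finset α} (hℓY : ℓ ∈ Y.lines) (hℓZ : ℓ ∉ Z.lines) :
    Z.secants ℓ ⊆ Z.lines \ Y.lines := by
  intro m hm
  obtain ⟨hmZ, hmℓ⟩ := mem_filter.mp hm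
  refine mem_sdiff.mpr ⟨hmZ, fun hmY => hℓZ ?_⟩
  obtain ⟨x, hx, y, hy, hxy⟩ := one_lt_card.mp hmℓ
  rw [mem_inter] at hx hy
  obtain h | h := hY.eq_or_eq hmY hℓY hx.1 hy.1 hx.2 hy.2
  · exact absurd h hxy
  · exact h ▸ hmZ

theorem card_le_card_secants (hY : IsProjPlaneOfOrder p Y) {ℓ : Finset α} (hℓ : ℓ ⊆ Y.pts)
    (hℓcard : #ℓ = p + 1) (hℓY : ℓ ∉ Y.lines) (hp : 0 < p) : p + 1 ≤ #(Y.secants ℓ) := by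
  rw [← hℓcard]
  refine card_le_card_of_covers_pairs (one_lt_card_iff_nontrivial.mp (by omega)) ?_ ?_ ?_
  · intro x hx y hy hxy
    obtain ⟨m, hm, hxm, hym⟩ := hY.exists_line_mem_mem (hℓ hx) (hℓ hy) hxy
    refine ⟨m, mem_filter.mpr ⟨hm, one_lt_card.mpr ?_⟩, hxm, hym⟩
    exact ⟨x, mem_inter.mpr ⟨hxm, hx⟩, y, mem_inter.mpr ⟨hym, hy⟩, hxy⟩
  · intro m₁ hm₁ m₂ hm₂ x _ y _
    exact hY.eq_or_eq (mem_filter.mp hm₁).1 (mem_filter.mp hm₂).1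
  · intro m hm hℓm
    have hmY := (mem_filter.mp hm).1
    exact hℓY (eq_of_subset_of_card_le hℓm (by rw [hY.card_line hmY, hℓcard]) ▸ hmY)

theorem lines_subset_of_card_lines_sdiff_le {Z : IncSys α} (hY : IsProjPlaneOfOrder p Y)
    (hZ : IsProjPlaneOfOrder p Z) (hpts : Y.pts ⊆ Z.pts) (hYZ : #(Y.lines \ Z.lines) ≤ p)
    (hZY : #(Z.lines \ Y.lines) ≤ p) : Y.lines ⊆ Z.lines := by
  intro ℓ hℓY
  by_contra hℓZ
  have hp : 0 < p := (card_pos.mpr ⟨ℓ, mem_sdiff.mpr ⟨hℓY, hℓZ⟩⟩).trans_le hYZ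
  have hmany := hZ.card_le_card_secants ((Y.line_sub ℓ hℓY).trans hpts) (hY.card_line hℓY)
    hℓZ hp
  have hfew := card_le_card (hY.secants_subset_lines_sdiff Z hℓY hℓZ)
  omega

end IsProjPlaneOfOrder

theorem proj_planes_sharing_many_lines_eq_general {α : Type} [DecidableEq α] (p : ℕ)
    (π σ : IncSys α)
    (hπ : IsProjPlaneOfOrder p π) (hσ : IsProjPlaneOfOrder p σ)
    (hshare : p ^ 2 + 1 ≤ (π.lines ∩ σ.lines).card) :
    π.pts = σ.pts ∧ π.lines = σ.lines := by
  have hπσ : #(π.lines \ σ.lines) ≤ p := by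
    rw [card_sdiff, inter_comm, hπ.card_lines]; omega
  have hσπ : #(σ.lines \ π.lines) ≤ p := by
    rw [card_sdiff, hσ.card_lines]; omega
  have hpts : π.pts = σ.pts :=
    (hπ.pts_subset_of_card_lines_sdiff_le σ hπσ).antisymm
      (hσ.pts_subset_of_card_lines_sdiff_le π hσπ)
  refine ⟨hpts, eq_of_subset_of_card_le ?_ (hσ.card_lines.trans hπ.card_lines.symm).le⟩
  exact hπ.lines_subset_of_card_lines_sdiff_le hσ hpts.subset hπσ hσπ

/-- Lemma 3.3: two projective planes of the same prime order `p` sharing at least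
`p² + 1` lines (as sets of points) are equal: they have the same point set and the same
set of lines. -/
theorem proj_planes_sharing_many_lines_eq {α : Type} [DecidableEq α] (p : ℕ)
    (hp : p.Prime) (π σ : IncSys α)
    (hπ : IsProjPlaneOfOrder p π) (hσ : IsProjPlaneOfOrder p σ)
    (hshare : p ^ 2 + 1 ≤ (π.lines ∩ σ.lines).card) :
    π.pts = σ.pts ∧ π.lines = σ.lines :=
  proj_planes_sharing_many_lines_eq_general p π σ hπ hσ hshare
end

section
/- The Pappus configuration ℙ contains exactly 18 ordered pairs (α, β) of disjoint lines, and for each such ordered pair there is a unique bijection f: α → β such that x and f(x) are non-collinear in ℙ for every x ∈ α. -/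
/-- The lines of the Pappus configuration on the nine points `0,…,8` of `Fin 9`
(points `x₁x₂x₃ = 0,1,2`, `y₁y₂y₃ = 3,4,5`, `z₁z₂z₃ = 6,7,8`). -/
def pappusLines : Finset (Finset (Fin 9)) :=
  {{0, 1, 2}, {3, 4, 5}, {6, 7, 8}, {0, 4, 8}, {1, 5, 6}, {2, 3, 7},
    {0, 5, 7}, {1, 3, 8}, {2, 4, 6}}

/-- The Pappus configuration contains exactly 18 ordered pairs of disjoint lines, and for
each such pair `(a, b)` there is a unique bijection `f : a → b` such that `x` and `f x`
are non-collinear for every `x ∈ a`. -/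
theorem pappus_disjoint_line_pairs :
    ((pappusLines ×ˢ pappusLines).filter fun q => Disjoint q.1 q.2).card = 18 ∧
      ∀ a ∈ pappusLines, ∀ b ∈ pappusLines, Disjoint a b →
        ∃! f : {x // x ∈ a} ≃ {x // x ∈ b},
          ∀ x : {x // x ∈ a}, ¬∃ ℓ ∈ pappusLines, x.1 ∈ ℓ ∧ (f x).1 ∈ ℓ := by
  constructor
  · decide
  · simp only [ExistsUnique]
    decide
end

section
/- Let π be a projective plane of prime order p with point set P, let Y be a p-admissible incidence system with k lines ℓ_0, ..., ℓ_{k−1} where p ≥ 2^k, and set w = ∑_{i<k} 2^i ℓ_i ∈ F_p^Q (indicator sums over the point set Q of Y). If w′ ∈ C_p(π) has the same type as w, then there exist k lines ℓ′_0, ..., ℓ′_{k−1} of π with w′ = ∑_{i<k} 2^i ℓ′_i, and there is a monomorphism f from Y into π with f(ℓ_i) = ℓ′_i for all i. -/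
/-! Lift `w'` to `N := ZMod.val ∘ w' : P → ℕ`. The integer word
`binaryWord ℓ = ∑ i, 2 ^ i • 1_{ℓ i}` on `Q` takes values below `2 ^ k ≤ p`, so `N` has the same
value distribution; in particular `∑ N = (p + 1) B` with `B = 2 ^ k - 1`. A codeword has the same
sum on all lines of `π`, so every line sum of `N` is `p t m + B` with `t m ∈ ℕ`, and counting flags
through a point gives `N = ∑ m, t m • 1_m`.

Inclusion–exclusion against the bound `k (p + 1)` on the number of nonzero points of `Q` leaves at
most `k` lines with `t m ≠ 0`. Each of them has at least two points on no other such line, where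
`N = t m`. In `Q` a nonzero value taken at two points comes from a single line `ℓ i`, because two
lines `ℓ i` meet only once; so `t m = 2 ^ i`, and since `2 ^ i` is taken at most `p + 1` times,
different lines carry different powers. They sum to `B`, hence are exactly `1, 2, …, 2 ^ (k - 1)`.
Now `N` and the word on `Q` encode at each point the set of indices of the lines through it, and
equal fibre sizes of these encodings give the bijection `Q ≃ P`. -/

open Finset

lemma twoPowSum_injective (k : ℕ) :
    Function.Injective fun S : Finset (Fin k) => ∑ i ∈ S, 2 ^ (i : ℕ) := by
  intro S T h
  have : ∑ i ∈ S.map Fin.valEmbedding, 2 ^ i = ∑ i ∈ T.map Fin.valEmbedding, 2 ^ i := by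
    simpa using h
  exact Finset.map_injective _ (Finset.geomSum_injective le_rfl this)

lemma choose_two_le_two_pow (k : ℕ) : (k + 1).choose 2 ≤ 2 ^ k := by
  induction k with
  | zero => simp
  | succ k ih =>
    rw [show (k + 1 + 1).choose 2 = (k + 1).choose 1 + (k + 1).choose 2 from
      Nat.choose_succ_succ' _ _, Nat.choose_one_right, pow_succ]
    have := k.lt_two_pow_self
    omega

lemma two_mul_le_two_pow (k : ℕ) : 2 * k ≤ 2 ^ k := by
  cases k with
  | zero => simp
  | succ k => rw [pow_succ]; have := k.lt_two_pow_self; omega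

lemma sum_two_pow_lt_two_pow {k : ℕ} (S : Finset (Fin k)) : ∑ i ∈ S, 2 ^ (i : ℕ) < 2 ^ k :=
  (sum_map S Fin.valEmbedding (2 ^ ·)).symm.trans_lt <| Nat.geomSum_lt le_rfl fun _ h => by
    obtain ⟨i, -, rfl⟩ := mem_map.1 h
    exact i.isLt

section BinaryWord
variable {α : Type*} [DecidableEq α] {k : ℕ} (ℓ : Fin k → Finset α)

def lineIndices (x : α) : Finset (Fin k) := {i | x ∈ ℓ i}

def binaryWord (x : α) : ℕ := ∑ i ∈ lineIndices ℓ x, 2 ^ (i : ℕ)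

variable {ℓ}

@[simp] lemma mem_lineIndices {x : α} {i : Fin k} : i ∈ lineIndices ℓ x ↔ x ∈ ℓ i := by
  simp [lineIndices]

lemma binaryWord_lt_two_pow (x : α) : binaryWord ℓ x < 2 ^ k :=
  sum_two_pow_lt_two_pow _

lemma binaryWord_eq_sum_ite (x : α) :
    binaryWord ℓ x = ∑ i : Fin k, (if x ∈ ℓ i then 2 ^ (i : ℕ) else 0) := by
  rw [binaryWord, lineIndices, sum_filter]

lemma natCast_binaryWord {R : Type*} [CommSemiring R] (x : α) :
    (binaryWord ℓ x : R) = ∑ i : Fin k, (2 ^ (i : ℕ) : R) * (if x ∈ ℓ i then 1 else 0) := by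
  simp [binaryWord_eq_sum_ite, mul_ite]

lemma sum_binaryWord [Fintype α] : ∑ x, binaryWord ℓ x = ∑ i : Fin k, 2 ^ (i : ℕ) * #(ℓ i) := by
  simp_rw [binaryWord_eq_sum_ite]
  rw [sum_comm]
  simp [mul_comm]

lemma binaryWord_eq_zero_iff {x : α} : binaryWord ℓ x = 0 ↔ ∀ i, x ∉ ℓ i := by
  simp [binaryWord]

lemma card_binaryWord_ne_zero_le [Fintype α] : #{x | binaryWord ℓ x ≠ 0} ≤ ∑ i, #(ℓ i) := by
  refine (card_le_card fun x hx => ?_).trans card_biUnion_le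
  simpa [binaryWord_eq_zero_iff] using hx

lemma mem_of_binaryWord_eq_two_pow {x : α} {i : Fin k} (h : binaryWord ℓ x = 2 ^ (i : ℕ)) :
    x ∈ ℓ i := by
  have : lineIndices ℓ x = {i} := twoPowSum_injective k (by simpa [binaryWord] using h)
  simpa [this] using (mem_lineIndices (ℓ := ℓ) (x := x) (i := i)).symm

lemma card_lineIndices_le_one (hℓ : ∀ i j, i ≠ j → #(ℓ i ∩ ℓ j) ≤ 1) {x y : α} (hxy : x ≠ y)
    (h : binaryWord ℓ x = binaryWord ℓ y) : #(lineIndices ℓ x) ≤ 1 := by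
  rw [card_le_one]
  intro i hi j hj
  by_contra hij
  have hxy' : lineIndices ℓ x = lineIndices ℓ y := twoPowSum_injective k h
  have : 1 < #(ℓ i ∩ ℓ j) := one_lt_card.2
    ⟨x, mem_inter.2 ⟨mem_lineIndices.1 hi, mem_lineIndices.1 hj⟩,
      y, mem_inter.2 ⟨mem_lineIndices.1 (hxy' ▸ hi), mem_lineIndices.1 (hxy' ▸ hj)⟩, hxy⟩
  exact (hℓ i j hij).not_gt this

end BinaryWord

section PairwiseMeeting
variable {α : Type*} [DecidableEq α] {s : Finset (Finset α)} {m m' : Finset α}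

lemma card_inter_biUnion_le (h : ∀ m' ∈ s, #(m ∩ m') ≤ 1) : #(m ∩ s.biUnion id) ≤ #s := by
  rw [inter_biUnion]
  exact card_biUnion_le.trans (by simpa using sum_le_card_nsmul s _ 1 h)

lemma sum_card_le_card_biUnion_add_choose (hs : ∀ m ∈ s, ∀ m' ∈ s, m ≠ m' → #(m ∩ m') ≤ 1) :
    ∑ m ∈ s, #m ≤ #(s.biUnion id) + (#s).choose 2 := by
  induction s using Finset.induction_on with
  | empty => simp
  | insert a s ha ih =>
    have hmeet : #(a ∩ s.biUnion id) ≤ #s := card_inter_biUnion_le fun m hm =>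
      hs a (mem_insert_self a s) m (mem_insert_of_mem hm) (ne_of_mem_of_not_mem hm ha).symm
    have hs' := ih fun m hm m' hm' => hs m (mem_insert_of_mem hm) m' (mem_insert_of_mem hm')
    have := card_union_add_card_inter a (s.biUnion id)
    rw [sum_insert ha, card_insert_of_notMem ha, biUnion_insert,
      show (#s + 1).choose 2 = (#s).choose 1 + (#s).choose 2 from Nat.choose_succ_succ' _ _,
      Nat.choose_one_right, id_eq]
    omega

lemma card_le_of_card_biUnion_le {p k : ℕ} (hs : ∀ m ∈ s, ∀ m' ∈ s, m ≠ m' → #(m ∩ m') ≤ 1)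
    (hcard : ∀ m ∈ s, #m = p + 1)
    (hunion : #(s.biUnion id) ≤ k * (p + 1)) (hk : (k + 1).choose 2 ≤ p) : #s ≤ k := by
  by_contra! hlt
  obtain ⟨t, hts, ht⟩ := exists_subset_card_eq hlt
  have hbonf := sum_card_le_card_biUnion_add_choose fun m hm m' hm' => hs m (hts hm) m' (hts hm')
  rw [sum_congr rfl fun m hm => hcard m (hts hm), sum_const, ht, smul_eq_mul] at hbonf
  have := card_le_card (biUnion_subset_biUnion_of_subset_left id hts)
  nlinarith

def privatePart (s : Finset (Finset α)) (m : Finset α) : Finset α :=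
  m \ (s.erase m).biUnion id

lemma filter_mem_eq_singleton_of_mem_privatePart {x : α} (hm : m ∈ s)
    (hx : x ∈ privatePart s m) : {m' ∈ s | x ∈ m'} = {m} := by
  obtain ⟨hxm, hx⟩ := mem_sdiff.1 hx
  ext m'
  simp only [mem_filter, mem_singleton]
  refine ⟨fun ⟨hm', hxm'⟩ => by_contra fun hne => hx ?_, fun h => h ▸ ⟨hm, hxm⟩⟩
  exact mem_biUnion.2 ⟨m', mem_erase.2 ⟨hne, hm'⟩, hxm'⟩

lemma disjoint_privatePart (hm : m ∈ s) (hne : m ≠ m') :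
    Disjoint (privatePart s m) (privatePart s m') := by
  refine disjoint_left.2 fun x hx hx' => (mem_sdiff.1 hx').2 ?_
  exact mem_biUnion.2 ⟨m, mem_erase.2 ⟨hne, hm⟩, (mem_sdiff.1 hx).1⟩

lemma card_le_card_privatePart_add (hs : ∀ m ∈ s, ∀ m' ∈ s, m ≠ m' → #(m ∩ m') ≤ 1)
    (hm : m ∈ s) : #m ≤ #(privatePart s m) + (#s - 1) := by
  have := card_sdiff_add_card_inter m ((s.erase m).biUnion id)
  have := card_inter_biUnion_le (s := s.erase m) (m := m) fun m' hm' =>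
    hs m hm m' (mem_of_mem_erase hm') (ne_of_mem_erase hm').symm
  rw [card_erase_of_mem hm] at this
  rw [privatePart]
  omega

end PairwiseMeeting

section Multiset
variable {α β γ : Type*} [Fintype α] [Fintype β] {f : α → γ} {g : β → γ}

lemma map_univ_eq_of_card_filter_eq [DecidableEq γ] (h : ∀ c, #{a | f a = c} = #{b | g b = c}) :
    univ.val.map f = univ.val.map g := by
  ext c
  simpa [Multiset.count_map, eq_comm, Finset.card_def, Finset.filter_val] using h c

lemma card_filter_comp_eq_of_map_univ_eq (h : univ.val.map f = univ.val.map g)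
    (q : γ → Prop) [DecidablePred q] : #{a | q (f a)} = #{b | q (g b)} := by
  simpa [Multiset.filter_map, Finset.card_def, Finset.filter_val] using
    congrArg (fun M => Multiset.card (M.filter q)) h

lemma exists_equiv_comp_eq_of_map_univ_eq (h : univ.val.map f = univ.val.map g) :
    ∃ e : α ≃ β, ∀ a, g (e a) = f a := by
  classical
  refine ⟨Equiv.ofFiberEquiv fun c => Fintype.equivOfCardEq ?_, Equiv.ofFiberEquiv_map _⟩
  simpa [Fintype.card_subtype] using card_filter_comp_eq_of_map_univ_eq h (· = c)

end Multiset

lemma exists_equiv_image_eq_of_map_binaryWord_eq {α β : Type*} [Fintype α] [Fintype β]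
    [DecidableEq α] [DecidableEq β] {k : ℕ} {ℓ : Fin k → Finset α} {ℓ' : Fin k → Finset β}
    (h : univ.val.map (binaryWord ℓ) = univ.val.map (binaryWord ℓ')) :
    ∃ e : α ≃ β, ∀ i, (ℓ i).image e = ℓ' i := by
  have hmap : univ.val.map (lineIndices ℓ) = univ.val.map (lineIndices ℓ') := by
    refine Multiset.map_injective (twoPowSum_injective k) ?_
    rw [Multiset.map_map, Multiset.map_map]
    exact h
  obtain ⟨e, he⟩ := exists_equiv_comp_eq_of_map_univ_eq hmap
  refine ⟨e, fun i => ?_⟩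
  ext y
  obtain ⟨x, rfl⟩ := e.surjective y
  simp [← mem_lineIndices (ℓ := ℓ'), he, e.injective.eq_iff]

lemma map_val_eq_map_binaryWord {α β : Type*} [Fintype α] [Fintype β] [DecidableEq β] {p k : ℕ}
    (hpk : 2 ^ k ≤ p) {ℓ : Fin k → Finset β} {v : α → ZMod p}
    (htype : ∀ c, #{x | v x = c} = #{y | (binaryWord ℓ y : ZMod p) = c}) :
    univ.val.map (fun x => (v x).val) = univ.val.map (binaryWord ℓ) := by
  change univ.val.map (ZMod.val ∘ v) = _
  rw [← Multiset.map_map, map_univ_eq_of_card_filter_eq htype, Multiset.map_map]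
  congr 1
  funext y
  exact ZMod.val_cast_of_lt ((binaryWord_lt_two_pow y).trans_le hpk)

section LineSums
variable {P : Type*} [Fintype P] [DecidableEq P] {p : ℕ} {L : Finset (Finset P)}

lemma sum_eq_sum_of_mem_span (hcard : ∀ m ∈ L, #m = p + 1)
    (hmeet : ∀ m ∈ L, ∀ m' ∈ L, m ≠ m' → #(m ∩ m') = 1) {v : P → ZMod p}
    (hv : v ∈ Submodule.span (ZMod p) {v | ∃ m ∈ L, v = fun x => if x ∈ m then 1 else 0})
    {m : Finset P} (hm : m ∈ L) : ∑ x ∈ m, v x = ∑ x, v x := by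
  have key := LinearMap.eqOn_span (R := ZMod p) (f := ∑ x ∈ m, LinearMap.proj x)
    (g := ∑ x, LinearMap.proj x) ?_ hv
  · simpa using key
  rintro _ ⟨m₀, hm₀, rfl⟩
  simp only [LinearMap.sum_apply, LinearMap.proj_apply, sum_boole, filter_mem_eq_inter,
    univ_inter, hcard m₀ hm₀]
  obtain rfl | hne := eq_or_ne m m₀
  · rw [inter_self, hcard m hm]
  · simp [hmeet m hm m₀ hm₀ hne]

lemma sum_val_modEq_of_mem_span [NeZero p] (hcard : ∀ m ∈ L, #m = p + 1)
    (hmeet : ∀ m ∈ L, ∀ m' ∈ L, m ≠ m' → #(m ∩ m') = 1) {v : P → ZMod p}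
    (hv : v ∈ Submodule.span (ZMod p) {v | ∃ m ∈ L, v = fun x => if x ∈ m then 1 else 0})
    {m : Finset P} (hm : m ∈ L) : ∑ x ∈ m, (v x).val ≡ ∑ x, (v x).val [MOD p] := by
  rw [← ZMod.natCast_eq_natCast_iff]
  push_cast [ZMod.natCast_val, ZMod.cast_id]
  exact sum_eq_sum_of_mem_span hcard hmeet hv hm

lemma sum_sum_filter_mem (t : Finset P → ℕ) :
    ∑ x, ∑ m ∈ L with x ∈ m, t m = ∑ m ∈ L, #m * t m := by
  rw [sum_comm' (t' := L) (s' := fun m => m) (by simp [and_comm])]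
  simp

end LineSums

namespace IsProjPlane
variable {P : Type} [Fintype P] [DecidableEq P] {p : ℕ} {L : Finset (Finset P)}

lemma card_inter (hπ : IsProjPlane p L) {m m' : Finset P} (hm : m ∈ L) (hm' : m' ∈ L)
    (hne : m ≠ m') : #(m ∩ m') = 1 := by
  obtain ⟨x, hx, huniq⟩ := hπ.2.2.2.2 m hm m' hm' hne
  exact card_eq_one.2 ⟨x, by ext y; simpa using ⟨huniq y, fun h => h ▸ hx⟩⟩

lemma card_filter_mem_mem (hπ : IsProjPlane p L) (x y : P) :
    #{m ∈ L | x ∈ m ∧ y ∈ m} = if x = y then p + 1 else 1 := by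
  split_ifs with hxy
  · simpa [hxy] using hπ.2.2.1 y
  · obtain ⟨m, hm, huniq⟩ := hπ.2.2.2.1 x y hxy
    exact card_eq_one.2 ⟨m, by ext m'; simpa using ⟨fun h => huniq m' h, fun h => h ▸ hm⟩⟩

lemma sum_sum_lines_through (hπ : IsProjPlane p L) (N : P → ℕ) (x : P) :
    ∑ m ∈ L with x ∈ m, ∑ y ∈ m, N y = ∑ y, N y + p * N x := by
  rw [sum_comm' (t' := univ) (s' := fun y => {m ∈ L | x ∈ m ∧ y ∈ m}) (by simp [and_assoc])]
  calc ∑ y, ∑ _m ∈ L with x ∈ _m ∧ y ∈ _m, N y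
      = ∑ y, (N y + if x = y then p * N y else 0) := sum_congr rfl fun y _ => by
        rw [sum_const, hπ.card_filter_mem_mem, smul_eq_mul]; split_ifs <;> ring
    _ = ∑ y, N y + p * N x := by rw [sum_add_distrib, sum_ite_eq]; simp

theorem exists_line_weights (hπ : IsProjPlane p L) (hp : 0 < p) {N : P → ℕ} {b : ℕ}
    (hb : b < p) (hsum : ∑ x, N x = (p + 1) * b)
    (hline : ∀ m ∈ L, ∑ x ∈ m, N x ≡ b [MOD p]) :
    ∃ t : Finset P → ℕ, (∀ x, N x = ∑ m ∈ L with x ∈ m, t m) ∧ ∑ m ∈ L, t m = b := by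
  set t : Finset P → ℕ := fun m => (∑ x ∈ m, N x) / p
  have ht : ∀ m ∈ L, ∑ x ∈ m, N x = p * t m + b := fun m hm => by
    have := Nat.div_add_mod (∑ x ∈ m, N x) p
    rw [hline m hm, Nat.mod_eq_of_lt hb] at this
    exact this.symm
  have hN : ∀ x, N x = ∑ m ∈ L with x ∈ m, t m := fun x => by
    have h := hπ.sum_sum_lines_through N x
    rw [sum_congr rfl fun m hm => ht m (mem_filter.1 hm).1, sum_add_distrib, sum_const,
      ← mul_sum, hπ.2.2.1 x, hsum, smul_eq_mul] at h
    exact (Nat.eq_of_mul_eq_mul_left hp (by linarith)).symm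
  refine ⟨t, hN, Nat.eq_of_mul_eq_mul_left (Nat.succ_pos p) ?_⟩
  rw [← hsum, sum_congr rfl fun x _ => hN x, sum_sum_filter_mem, mul_sum]
  exact sum_congr rfl fun m hm => by rw [hπ.2.1 m hm]

end IsProjPlane

section Decomposition
variable {P Q : Type*} [DecidableEq P] [Fintype Q] [DecidableEq Q] {p k : ℕ}
  {s : Finset (Finset P)} {t : Finset P → ℕ} {N : P → ℕ} {ℓ : Fin k → Finset Q}

lemma eq_of_mem_privatePart (hN : ∀ x, N x = ∑ m ∈ s with x ∈ m, t m) {m : Finset P} {x : P}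
    (hm : m ∈ s) (hx : x ∈ privatePart s m) : N x = t m := by
  rw [hN x, filter_mem_eq_singleton_of_mem_privatePart hm hx, sum_singleton]

lemma sum_filter_ne_zero_filter_mem (L : Finset (Finset P)) (x : P) :
    ∑ m ∈ {m ∈ L | t m ≠ 0} with x ∈ m, t m = ∑ m ∈ L with x ∈ m, t m := by
  conv_rhs => rw [← sum_filter_ne_zero]
  rw [filter_comm]

variable [Fintype P]

lemma card_le_of_card_ne_zero_le (hcard : ∀ m ∈ s, #m = p + 1)
    (hmeet : ∀ m ∈ s, ∀ m' ∈ s, m ≠ m' → #(m ∩ m') ≤ 1)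
    (hN : ∀ x, N x = ∑ m ∈ s with x ∈ m, t m) (hpos : ∀ m ∈ s, t m ≠ 0)
    (hnz : #{x | N x ≠ 0} ≤ k * (p + 1)) (hk : (k + 1).choose 2 ≤ p) : #s ≤ k := by
  refine card_le_of_card_biUnion_le hmeet hcard ((card_le_card fun x hx => ?_).trans hnz) hk
  obtain ⟨m, hm, hxm⟩ := mem_biUnion.1 hx
  have : t m ≤ N x := hN x ▸ single_le_sum (fun _ _ => Nat.zero_le _) (mem_filter.2 ⟨hm, hxm⟩)
  have := hpos m hm
  simp only [mem_filter, mem_univ, true_and]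
  omega

lemma exists_eq_two_pow_of_mem (hcard : ∀ m ∈ s, #m = p + 1)
    (hmeet : ∀ m ∈ s, ∀ m' ∈ s, m ≠ m' → #(m ∩ m') ≤ 1)
    (hN : ∀ x, N x = ∑ m ∈ s with x ∈ m, t m) (hpos : ∀ m ∈ s, t m ≠ 0)
    (hℓ : ∀ i j, i ≠ j → #(ℓ i ∩ ℓ j) ≤ 1) (hmap : univ.val.map N = univ.val.map (binaryWord ℓ))
    (hsk : #s ≤ k) (hkp : 2 * k ≤ p) {m : Finset P} (hm : m ∈ s) :
    ∃ i : Fin k, t m = 2 ^ (i : ℕ) := by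
  have hpriv := card_le_card_privatePart_add hmeet hm
  rw [hcard m hm] at hpriv
  have := card_pos.2 ⟨m, hm⟩
  have h2 : 1 < #{y | binaryWord ℓ y = t m} := by
    rw [← card_filter_comp_eq_of_map_univ_eq hmap (· = t m)]
    refine lt_of_lt_of_le (?_ : 1 < #(privatePart s m)) (card_le_card fun x hx => ?_)
    · omega
    · simpa using eq_of_mem_privatePart hN hm hx
  obtain ⟨y, hy, y', hy', hne⟩ := one_lt_card.1 h2
  simp only [mem_filter, mem_univ, true_and] at hy hy'
  obtain ⟨i, hi⟩ : ∃ i, lineIndices ℓ y = {i} := by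
    rcases Nat.le_one_iff_eq_zero_or_eq_one.1 (card_lineIndices_le_one hℓ hne (hy.trans hy'.symm))
      with h | h
    · rw [card_eq_zero] at h
      exact absurd (by rw [← hy, binaryWord, h, sum_empty]) (hpos m hm)
    · exact card_eq_one.1 h
  exact ⟨i, by rw [← hy, binaryWord, hi, sum_singleton]⟩

lemma injOn_of_map_eq_map_binaryWord (hcard : ∀ m ∈ s, #m = p + 1)
    (hmeet : ∀ m ∈ s, ∀ m' ∈ s, m ≠ m' → #(m ∩ m') ≤ 1)
    (hN : ∀ x, N x = ∑ m ∈ s with x ∈ m, t m) (hpos : ∀ m ∈ s, t m ≠ 0)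
    (hℓcard : ∀ i, #(ℓ i) = p + 1) (hℓ : ∀ i j, i ≠ j → #(ℓ i ∩ ℓ j) ≤ 1)
    (hmap : univ.val.map N = univ.val.map (binaryWord ℓ)) (hsk : #s ≤ k) (hkp : 2 * k ≤ p) :
    Set.InjOn t s := by
  intro m hm m' hm' heq
  by_contra hne
  obtain ⟨i, hi⟩ := exists_eq_two_pow_of_mem hcard hmeet hN hpos hℓ hmap hsk hkp hm
  have hfiber : privatePart s m ∪ privatePart s m' ⊆ ({x | N x = 2 ^ (i : ℕ)} : Finset P) := by
    intro x hx
    rcases mem_union.1 hx with hx | hx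
    · simpa [hi] using eq_of_mem_privatePart hN hm hx
    · simpa [← heq, hi] using eq_of_mem_privatePart hN hm' hx
  have hQ : #{y | binaryWord ℓ y = 2 ^ (i : ℕ)} ≤ p + 1 :=
    (hℓcard i) ▸ card_le_card fun y hy => mem_of_binaryWord_eq_two_pow (mem_filter.1 hy).2
  rw [← card_filter_comp_eq_of_map_univ_eq hmap (· = 2 ^ (i : ℕ))] at hQ
  have := card_le_card hfiber
  rw [card_union_of_disjoint (disjoint_privatePart hm hne)] at this
  have h1 := card_le_card_privatePart_add hmeet hm
  have h2 := card_le_card_privatePart_add hmeet hm'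
  rw [hcard m hm] at h1
  rw [hcard m' hm'] at h2
  omega

theorem exists_lines_eq_binaryWord_of_pos (hcard : ∀ m ∈ s, #m = p + 1)
    (hmeet : ∀ m ∈ s, ∀ m' ∈ s, m ≠ m' → #(m ∩ m') ≤ 1)
    (hN : ∀ x, N x = ∑ m ∈ s with x ∈ m, t m) (hpos : ∀ m ∈ s, t m ≠ 0)
    (hℓcard : ∀ i, #(ℓ i) = p + 1) (hℓ : ∀ i j, i ≠ j → #(ℓ i ∩ ℓ j) ≤ 1)
    (hmap : univ.val.map N = univ.val.map (binaryWord ℓ)) (hsk : #s ≤ k) (hkp : 2 * k ≤ p)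
    (hsum : ∑ m ∈ s, t m = ∑ i : Fin k, 2 ^ (i : ℕ)) :
    ∃ ℓ' : Fin k → Finset P, Function.Injective ℓ' ∧ (∀ i, ℓ' i ∈ s) ∧
      ∀ x, N x = binaryWord ℓ' x := by
  have hinj := injOn_of_map_eq_map_binaryWord hcard hmeet hN hpos hℓcard hℓ hmap hsk hkp
  choose! e he using fun m (hm : m ∈ s) =>
    let ⟨i, hi⟩ := exists_eq_two_pow_of_mem hcard hmeet hN hpos hℓ hmap hsk hkp hm
    (⟨i, hi⟩ : ∃ i : ℕ, t m = 2 ^ i)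
  have himage : s.image e = range k := Finset.geomSum_injective le_rfl <| by
    simp only
    rw [sum_image fun m hm m' hm' h => hinj hm hm' (by rw [he m hm, he m' hm', h]),
      ← Fin.sum_univ_eq_sum_range (2 ^ ·), ← hsum]
    exact sum_congr rfl fun m hm => (he m hm).symm
  choose ℓ' hℓ's hℓ'e using fun i : Fin k =>
    mem_image.1 (himage ▸ mem_range.2 i.isLt : (i : ℕ) ∈ s.image e)
  have hℓ'inj : Function.Injective ℓ' := fun i j h =>
    Fin.ext ((hℓ'e i).symm.trans ((congrArg e h).trans (hℓ'e j)))
  have hs : s = univ.image ℓ' := by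
    ext m
    refine ⟨fun hm => ?_, fun hm => ?_⟩
    · have hem : e m < k := mem_range.1 (himage ▸ mem_image_of_mem e hm)
      exact mem_image.2 ⟨⟨e m, hem⟩, mem_univ _, hinj (hℓ's _) hm <| by
        rw [he _ (hℓ's _), he m hm, hℓ'e]⟩
    · obtain ⟨i, -, rfl⟩ := mem_image.1 hm
      exact hℓ's i
  refine ⟨ℓ', hℓ'inj, hℓ's, fun x => ?_⟩
  rw [hN x, hs, filter_image, sum_image hℓ'inj.injOn, binaryWord, lineIndices]
  exact sum_congr rfl fun i _ => by rw [he _ (hℓ's i), hℓ'e]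

theorem exists_lines_eq_binaryWord {L : Finset (Finset P)} (hL : ∀ m ∈ L, #m = p + 1)
    (hLmeet : ∀ m ∈ L, ∀ m' ∈ L, m ≠ m' → #(m ∩ m') ≤ 1) (hpk : 2 ^ k ≤ p)
    (hN : ∀ x, N x = ∑ m ∈ L with x ∈ m, t m) (ht : ∑ m ∈ L, t m = ∑ i : Fin k, 2 ^ (i : ℕ))
    (hℓcard : ∀ i, #(ℓ i) = p + 1) (hℓ : ∀ i j, i ≠ j → #(ℓ i ∩ ℓ j) ≤ 1)
    (hmap : univ.val.map N = univ.val.map (binaryWord ℓ)) :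
    ∃ ℓ' : Fin k → Finset P, Function.Injective ℓ' ∧ (∀ i, ℓ' i ∈ L) ∧
      ∀ x, N x = binaryWord ℓ' x := by
  set s := {m ∈ L | t m ≠ 0}
  have hcard : ∀ m ∈ s, #m = p + 1 := fun m hm => hL m (mem_filter.1 hm).1
  have hmeet : ∀ m ∈ s, ∀ m' ∈ s, m ≠ m' → #(m ∩ m') ≤ 1 := fun m hm m' hm' =>
    hLmeet m (mem_filter.1 hm).1 m' (mem_filter.1 hm').1
  have hNs : ∀ x, N x = ∑ m ∈ s with x ∈ m, t m := fun x =>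
    (hN x).trans (sum_filter_ne_zero_filter_mem L x).symm
  have hpos : ∀ m ∈ s, t m ≠ 0 := fun m hm => (mem_filter.1 hm).2
  have hnz : #{x | N x ≠ 0} ≤ k * (p + 1) := by
    rw [card_filter_comp_eq_of_map_univ_eq hmap (· ≠ 0)]
    simpa [hℓcard] using card_binaryWord_ne_zero_le (ℓ := ℓ)
  have hsk := card_le_of_card_ne_zero_le hcard hmeet hNs hpos hnz
    ((choose_two_le_two_pow k).trans hpk)
  obtain ⟨ℓ', hinj, hmem, hN'⟩ := exists_lines_eq_binaryWord_of_pos hcard hmeet hNs hpos hℓcard hℓ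
    hmap hsk ((two_mul_le_two_pow k).trans hpk) (by rw [sum_filter_ne_zero, ht])
  exact ⟨ℓ', hinj, fun i => (mem_filter.1 (hmem i)).1, hN'⟩

end Decomposition

theorem word_of_type_comes_from_lines_general (p k : ℕ) (hpk : 2 ^ k ≤ p)
    {P : Type} [Fintype P] [DecidableEq P] (L : Finset (Finset P)) (hπ : IsProjPlane p L)
    {Q : Type} [Fintype Q] [DecidableEq Q] (LY : Finset (Finset Q))
    (hYline : ∀ m ∈ LY, m.card = p + 1)
    (hYmeet : ∀ m₁ ∈ LY, ∀ m₂ ∈ LY, m₁ ≠ m₂ → (m₁ ∩ m₂).card = 1)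
    (ℓ : Fin k → Finset Q) (hℓinj : Function.Injective ℓ) (hℓmem : ∀ i, ℓ i ∈ LY)
    (w : Q → ZMod p)
    (hw : w = fun x => ∑ i : Fin k, (2 ^ (i : ℕ) : ZMod p) *
      (if x ∈ ℓ i then (1 : ZMod p) else 0))
    (w' : P → ZMod p)
    (hw' : w' ∈ Submodule.span (ZMod p)
      {v : P → ZMod p | ∃ m ∈ L, v = fun x => if x ∈ m then (1 : ZMod p) else 0})
    (htype : ∀ c : ZMod p,
      (Finset.univ.filter fun x : P => w' x = c).card =
        (Finset.univ.filter fun x : Q => w x = c).card) :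
    ∃ ℓ' : Fin k → Finset P, Function.Injective ℓ' ∧ (∀ i, ℓ' i ∈ L) ∧
      (w' = fun x => ∑ i : Fin k, (2 ^ (i : ℕ) : ZMod p) *
        (if x ∈ ℓ' i then (1 : ZMod p) else 0)) ∧
      ∃ f : Q → P, Function.Injective f ∧ ∀ i, (ℓ i).image f = ℓ' i := by
  have hp : 0 < p := (Nat.two_pow_pos k).trans_le hpk
  have : NeZero p := ⟨hp.ne'⟩
  simp_rw [← natCast_binaryWord] at hw
  subst hw
  set N : P → ℕ := fun x => (w' x).val
  have hmap : univ.val.map N = univ.val.map (binaryWord ℓ) := map_val_eq_map_binaryWord hpk htype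
  have hsum : ∑ x, N x = (p + 1) * ∑ i : Fin k, 2 ^ (i : ℕ) := by
    rw [sum_eq_multiset_sum, hmap, ← sum_eq_multiset_sum, sum_binaryWord, mul_sum]
    simp [hYline _ (hℓmem _), mul_comm]
  have hline : ∀ m ∈ L, ∑ x ∈ m, N x ≡ ∑ i : Fin k, 2 ^ (i : ℕ) [MOD p] := fun m hm =>
    (sum_val_modEq_of_mem_span hπ.2.1 (fun _ hm _ hm' => hπ.card_inter hm hm') hw' hm).trans <| by
      rw [hsum, Nat.ModEq, add_one_mul, Nat.mul_add_mod_self_left]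
  obtain ⟨t, hN, ht⟩ :=
    hπ.exists_line_weights hp ((sum_two_pow_lt_two_pow univ).trans_le hpk) hsum hline
  obtain ⟨ℓ', hinj, hmem, hN'⟩ := exists_lines_eq_binaryWord hπ.2.1
    (fun m hm m' hm' h => (hπ.card_inter hm hm' h).le) hpk hN ht (fun i => hYline _ (hℓmem i))
    (fun i j hij => (hYmeet _ (hℓmem i) _ (hℓmem j) (hℓinj.ne hij)).le) hmap
  rw [show N = binaryWord ℓ' from funext hN'] at hmap
  obtain ⟨e, he⟩ := exists_equiv_image_eq_of_map_binaryWord_eq hmap.symm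
  refine ⟨ℓ', hinj, hmem, ?_, e, e.injective, he⟩
  funext x
  rw [← natCast_binaryWord, ← hN' x, ZMod.natCast_val, ZMod.cast_id]

/-- Lemma 3.9: let `π` be a projective plane of prime order `p` with point type `P` and
lines `L`, and let `Y` be a `p`-admissible incidence system (point type `Q`, lines `LY`)
with exactly `k` lines `ℓ 0, …, ℓ (k−1)`, where `2^k ≤ p`.  Set
`w = ∑ i, 2^i · 1_{ℓ i} ∈ F_p^Q`.  If `w' ∈ C_p(π)` has the same type as `w`, then there
are `k` distinct lines `ℓ' i` of `π` with `w' = ∑ i, 2^i · 1_{ℓ' i}`, and a monomorphism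
`f : Q → P` from `Y` into `π` with `f(ℓ i) = ℓ' i` for all `i`. -/
theorem word_of_type_comes_from_lines (p k : ℕ) (hp : p.Prime) (hpk : 2 ^ k ≤ p)
    {P : Type} [Fintype P] [DecidableEq P] (L : Finset (Finset P)) (hπ : IsProjPlane p L)
    {Q : Type} [Fintype Q] [DecidableEq Q] (LY : Finset (Finset Q))
    (hQcard : Fintype.card Q = p ^ 2 + p + 1)
    (hYline : ∀ m ∈ LY, m.card = p + 1)
    (hYmeet : ∀ m₁ ∈ LY, ∀ m₂ ∈ LY, m₁ ≠ m₂ → (m₁ ∩ m₂).card = 1)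
    (hLYcard : LY.card = k)
    (ℓ : Fin k → Finset Q) (hℓinj : Function.Injective ℓ) (hℓmem : ∀ i, ℓ i ∈ LY)
    (w : Q → ZMod p)
    (hw : w = fun x => ∑ i : Fin k, (2 ^ (i : ℕ) : ZMod p) *
      (if x ∈ ℓ i then (1 : ZMod p) else 0))
    (w' : P → ZMod p)
    (hw' : w' ∈ Submodule.span (ZMod p)
      {v : P → ZMod p | ∃ m ∈ L, v = fun x => if x ∈ m then (1 : ZMod p) else 0})
    (htype : ∀ c : ZMod p,
      (Finset.univ.filter fun x : P => w' x = c).card =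
        (Finset.univ.filter fun x : Q => w x = c).card) :
    ∃ ℓ' : Fin k → Finset P, Function.Injective ℓ' ∧ (∀ i, ℓ' i ∈ L) ∧
      (w' = fun x => ∑ i : Fin k, (2 ^ (i : ℕ) : ZMod p) *
        (if x ∈ ℓ' i then (1 : ZMod p) else 0)) ∧
      ∃ f : Q → P, Function.Injective f ∧ ∀ i, (ℓ i).image f = ℓ' i :=
  word_of_type_comes_from_lines_general p k hpk L hπ LY hYline hYmeet ℓ hℓinj hℓmem w hw w' hw'
    htype
end
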